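/- arXiv:1208.5151 — 8 statements merged into one kernel-verified Lean document; each statement's English description precedes it below -/
import Mathlib

section
/- The sequence n ↦ |B_{2n}|^(1/n) is strictly increasing for all n ≥ 1, where B_k denotes the k-th Bernoulli number. -/
/-!
Euler's formula gives `|B_{2n}| = a_n / (4π²)^n` with `a_n = 2 (2n)! ζ(2n)`, so `|B_{2n}|^{1/n}`
is `a_n^{1/n} / (4π²)` and it suffices that `a_n^{n+1} < a_{n+1}^n`. Since `1 < ζ(2n) < 5/3`, this
reduces to the elementary bound `2 (5/3)^{n+1} (2n)! < ((2n+1)(2n+2))^n`; the ratio of consecutive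
values of `((2n+1)(2n+2))^n / (2n)!` exceeds `2` by Bernoulli's inequality.
-/

open Real Nat

-- `ζ(2k)`; the `n = 0` term is `1 / 0 = 0`.
noncomputable def zetaEven (k : ℕ) : ℝ := ∑' n : ℕ, 1 / (n : ℝ) ^ (2 * k)

section Zeta

variable {k : ℕ}

lemma hasSum_zetaEven (hk : k ≠ 0) : HasSum (fun n : ℕ => 1 / (n : ℝ) ^ (2 * k)) (zetaEven k) :=
  (hasSum_zeta_nat hk).summable.hasSum

lemma one_lt_zetaEven (hk : k ≠ 0) : 1 < zetaEven k := by
  have h : ∑ n ∈ ({1, 2} : Finset ℕ), 1 / (n : ℝ) ^ (2 * k) ≤ zetaEven k :=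
    sum_le_hasSum _ (fun _ _ => by positivity) (hasSum_zetaEven hk)
  norm_num at h
  linarith [show (0 : ℝ) < (2 ^ (2 * k))⁻¹ by positivity]

lemma zetaEven_pos (hk : k ≠ 0) : 0 < zetaEven k := one_pos.trans (one_lt_zetaEven hk)

lemma zetaEven_lt_five_thirds (hk : k ≠ 0) : zetaEven k < 5 / 3 := by
  have h : zetaEven k ≤ π ^ 2 / 6 := by
    refine hasSum_le (fun n => ?_) (hasSum_zetaEven hk) hasSum_zeta_two
    rcases Nat.eq_zero_or_pos n with rfl | hn
    · simp [zero_pow (by omega : 2 * k ≠ 0)]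
    · gcongr
      · exact_mod_cast hn
      · omega
  nlinarith [pi_lt_d2, pi_pos]

lemma abs_bernoulli_two_mul (hk : k ≠ 0) :
    |((bernoulli (2 * k) : ℚ) : ℝ)| = 2 * (2 * k)! * zetaEven k / (4 * π ^ 2) ^ k := by
  have hZ : zetaEven k = (-1 : ℝ) ^ (k + 1) * 2 ^ (2 * k - 1) * π ^ (2 * k) *
      (bernoulli (2 * k) : ℚ) / (2 * k)! := (hasSum_zeta_nat hk).tsum_eq
  have h2 : (2 : ℝ) ^ (2 * k) = 2 * 2 ^ (2 * k - 1) := by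
    rw [← pow_succ' (2 : ℝ), Nat.sub_add_cancel (by omega)]
  have hpow : (4 * π ^ 2) ^ k = (2 : ℝ) ^ (2 * k) * π ^ (2 * k) := by
    rw [pow_mul, pow_mul, ← mul_pow]; norm_num
  rw [← abs_of_pos (zetaEven_pos hk), hZ, hpow, h2]
  simp only [abs_div, abs_mul, abs_pow, abs_neg, abs_one, one_pow, one_mul, abs_two,
    abs_of_pos pi_pos, Nat.abs_cast]
  field_simp

end Zeta

lemma two_mul_pow_le_add_two_pow (n : ℕ) : 2 * (2 * n + 1) ^ (n + 1) ≤ (2 * n + 3) ^ (n + 1) := by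
  have h := pow_add_mul_le_add_pow (a := 2 * n + 1) (b := 2) (by omega) (by omega) (n + 1)
  simp only [Nat.add_sub_cancel, Nat.cast_id] at h
  calc 2 * (2 * n + 1) ^ (n + 1) = (2 * n + 1) ^ (n + 1) + (2 * n + 1) * (2 * n + 1) ^ n := by ring
    _ ≤ (2 * n + 1) ^ (n + 1) + (n + 1) * (2 * n + 1) ^ n * 2 := by
      rw [mul_comm _ 2, ← mul_assoc]; gcongr; omega
    _ ≤ (2 * n + 3) ^ (n + 1) := h

lemma three_mul_two_pow_mul_factorial_le {n : ℕ} (hn : 1 ≤ n) :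
    3 * 2 ^ n * (2 * n)! ≤ ((2 * n + 1) * (2 * n + 2)) ^ n := by
  induction n, hn using Nat.le_induction with
  | base => decide
  | succ n hn ih =>
    have hfact : (2 * (n + 1))! = (2 * n + 1) * (2 * n + 2) * (2 * n)! := by
      rw [show 2 * (n + 1) = 2 * n + 1 + 1 by ring, factorial_succ, factorial_succ]; ring
    calc 3 * 2 ^ (n + 1) * (2 * (n + 1))!
        = 2 * ((2 * n + 1) * (2 * n + 2)) * (3 * 2 ^ n * (2 * n)!) := by rw [hfact]; ring
      _ ≤ 2 * ((2 * n + 1) * (2 * n + 2)) * ((2 * n + 1) * (2 * n + 2)) ^ n := by gcongr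
      _ = 2 * (2 * n + 1) ^ (n + 1) * (2 * n + 2) ^ (n + 1) := by rw [mul_pow]; ring
      _ ≤ (2 * n + 3) ^ (n + 1) * (2 * n + 4) ^ (n + 1) := by
        gcongr
        · exact two_mul_pow_le_add_two_pow n
        · omega
      _ = ((2 * (n + 1) + 1) * (2 * (n + 1) + 2)) ^ (n + 1) := by rw [mul_pow]; ring

lemma five_thirds_pow_mul_two_le {n : ℕ} (hn : n ≠ 0) : (5 / 3 : ℝ) ^ (n + 1) * 2 ≤ 3 * 2 ^ n := by
  have h : (5 / 6 : ℝ) ^ n ≤ 5 / 6 := pow_le_of_le_one (by norm_num) (by norm_num) hn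
  have h2 : (5 / 3 : ℝ) ^ (n + 1) * 2 = 10 / 3 * ((5 / 6) ^ n * 2 ^ n) := by
    rw [← mul_pow]; ring
  rw [h2]
  nlinarith [pow_pos (two_pos (α := ℝ)) n]

lemma factorial_mul_zetaEven_pow_succ_lt_pow {n : ℕ} (hn : n ≠ 0) :
    (2 * (2 * n)! * zetaEven n) ^ (n + 1) < (2 * (2 * (n + 1))! * zetaEven (n + 1)) ^ n := by
  set F : ℝ := 2 * (2 * n)!
  set q : ℝ := (2 * n + 1) * (2 * n + 2)
  have hfact : (2 * (2 * (n + 1))! : ℝ) = q * F := by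
    rw [show 2 * (n + 1) = 2 * n + 1 + 1 by ring, factorial_succ, factorial_succ]; push_cast; ring
  have hkey : (5 / 3 : ℝ) ^ (n + 1) * F ≤ q ^ n := by
    have h := three_mul_two_pow_mul_factorial_le (Nat.one_le_iff_ne_zero.mpr hn)
    have h' : (3 * 2 ^ n * (2 * n)! : ℝ) ≤ q ^ n := by simp only [q]; exact_mod_cast h
    calc (5 / 3 : ℝ) ^ (n + 1) * F = (5 / 3 : ℝ) ^ (n + 1) * 2 * (2 * n)! := by ring
      _ ≤ 3 * 2 ^ n * (2 * n)! := by gcongr ?_ * _; exact five_thirds_pow_mul_two_le hn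
      _ ≤ q ^ n := h'
  calc (F * zetaEven n) ^ (n + 1)
      < (F * (5 / 3)) ^ (n + 1) := by
        have := zetaEven_pos hn
        gcongr
        exact zetaEven_lt_five_thirds hn
    _ = ((5 / 3 : ℝ) ^ (n + 1) * F) * F ^ n := by rw [mul_pow, pow_succ F]; ring
    _ ≤ q ^ n * F ^ n := by gcongr
    _ = (q * F * 1) ^ n := by rw [mul_one, mul_pow q]
    _ < (q * F * zetaEven (n + 1)) ^ n := by
        gcongr; exact one_lt_zetaEven (Nat.succ_ne_zero n)
    _ = _ := by rw [hfact]

lemma rpow_inv_natCast_lt_of_pow_succ_lt {x y : ℝ} {n : ℕ} (hn : n ≠ 0) (hx : 0 ≤ x)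
    (hy : 0 ≤ y) (h : x ^ (n + 1) < y ^ n) :
    x ^ ((n : ℝ)⁻¹) < y ^ (((n + 1 : ℕ) : ℝ)⁻¹) := by
  have hu := rpow_inv_natCast_pow hx hn
  have hv := rpow_inv_natCast_pow hy n.succ_ne_zero
  rw [← hu, ← hv, ← pow_mul, ← pow_mul, mul_comm n] at h
  exact (pow_lt_pow_iff_left₀ (by positivity) (by positivity) (by positivity)).mp h

lemma abs_bernoulli_two_mul_rpow_inv {k : ℕ} (hk : k ≠ 0) :
    |((bernoulli (2 * k) : ℚ) : ℝ)| ^ ((k : ℝ)⁻¹)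
      = (2 * (2 * k)! * zetaEven k) ^ ((k : ℝ)⁻¹) / (4 * π ^ 2) := by
  rw [abs_bernoulli_two_mul hk, div_rpow (by positivity [zetaEven_pos hk]) (by positivity),
    pow_rpow_inv_natCast (by positivity) hk]

theorem bernoulli_root_strictMono :
    StrictMonoOn (fun n : ℕ => |((bernoulli (2 * n) : ℚ) : ℝ)| ^ ((n : ℝ)⁻¹))
      {n : ℕ | 1 ≤ n} := by
  refine strictMonoOn_of_lt_add_one Set.ordConnected_Ici fun n _ hn _ => ?_
  replace hn : n ≠ 0 := Nat.one_le_iff_ne_zero.mp hn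
  have hn' : n + 1 ≠ 0 := n.succ_ne_zero
  rw [abs_bernoulli_two_mul_rpow_inv hn, abs_bernoulli_two_mul_rpow_inv hn']
  gcongr
  exact rpow_inv_natCast_lt_of_pow_succ_lt hn (by positivity [zetaEven_pos hn])
    (by positivity [zetaEven_pos hn']) (factorial_mul_zetaEven_pow_succ_lt_pow hn)
end

section
/- The sequence n ↦ |T_{2n-1}|^(1/n) is strictly increasing for all n ≥ 1, where T_k are the tangent numbers. -/
/-!
Euler's formula for `ζ(2n)`, with the even terms removed, turns the Bernoulli expression for
`|T_{2n-1}|` into the partial-fraction series of `tan` at its poles `(2k+1)π/2`: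
`|T_{2n-1}| = 2 (2n-1)! ∑ₖ (2 / ((2k+1)π))^{2n}`.
Termwise Cauchy–Schwarz together with `(2n+1)!² ≤ (2n-1)! (2n+3)!` makes this sequence
log-convex, and a log-convex sequence `a` with `a₁ = 1 < a₂` (here `|T₁| = 1`, `|T₃| = 2`) has
`(log aₙ) / n` strictly increasing.
-/

open Real Filter Topology
open scoped Nat

theorem HasSum.sq_le_mul {ι : Type*} {r f g : ι → ℝ} {a b c : ℝ}
    (hr : HasSum r a) (hf : HasSum f b) (hg : HasSum g c)
    (hf₀ : ∀ i, 0 ≤ f i) (hg₀ : ∀ i, 0 ≤ g i) (hrfg : ∀ i, r i ^ 2 ≤ f i * g i) :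
    a ^ 2 ≤ b * c :=
  le_of_tendsto_of_tendsto' (hr.pow 2) (Tendsto.mul hf hg) fun s =>
    Finset.sum_sq_le_sum_mul_sum_of_sq_le_mul s (fun i _ => hf₀ i) (fun i _ => hg₀ i)
      fun i _ => hrfg i

theorem HasSum.odd_of_even {E : Type*} [NormedAddCommGroup E] [CompleteSpace E]
    {f : ℕ → E} {a b : E} (hf : HasSum f a) (he : HasSum (fun k => f (2 * k)) b) :
    HasSum (fun k => f (2 * k + 1)) (a - b) := by
  have ho : Summable fun k => f (2 * k + 1) :=
    hf.summable.comp_injective ((add_left_injective 1).comp (mul_right_injective₀ two_ne_zero))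
  rw [hf.unique (he.even_add_odd ho.hasSum), add_sub_cancel_left]
  exact ho.hasSum

theorem Nat.sq_factorial_add_two_le (m : ℕ) : (m + 2)! ^ 2 ≤ m ! * (m + 4)! := by
  have h : (m + 1) * (m + 2) ≤ (m + 3) * (m + 4) := by nlinarith
  calc (m + 2)! ^ 2 = (m + 1) * (m + 2) * ((m + 1) * (m + 2)) * m ! ^ 2 := by
        simp only [Nat.factorial_succ]; ring
    _ ≤ (m + 1) * (m + 2) * ((m + 3) * (m + 4)) * m ! ^ 2 := by gcongr
    _ = m ! * (m + 4)! := by simp only [Nat.factorial_succ]; ring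

theorem hasSum_one_div_nat_pow_abs_bernoulli {n : ℕ} (hn : n ≠ 0) :
    HasSum (fun k : ℕ => 1 / (k : ℝ) ^ (2 * n))
      (2 ^ (2 * n - 1) * π ^ (2 * n) * |((bernoulli (2 * n) : ℚ) : ℝ)| / (2 * n)!) := by
  have h := hasSum_zeta_nat hn
  convert h using 1
  -- the sum is positive, which fixes the sign `(-1) ^ (n + 1)` of the Bernoulli number
  rw [← abs_of_nonneg (h.nonneg fun k => by positivity)]
  simp [abs_mul, abs_div, abs_of_pos pi_pos]

theorem hasSum_one_div_odd_pow {n : ℕ} (hn : n ≠ 0) :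
    HasSum (fun k : ℕ => 1 / ((2 * k + 1 : ℕ) : ℝ) ^ (2 * n))
      ((1 - 1 / 4 ^ n) *
        (2 ^ (2 * n - 1) * π ^ (2 * n) * |((bernoulli (2 * n) : ℚ) : ℝ)| / (2 * n)!)) := by
  have h := hasSum_one_div_nat_pow_abs_bernoulli hn
  rw [sub_mul, one_mul]
  refine h.odd_of_even ((h.mul_left (1 / 4 ^ n)).congr_fun fun k => ?_)
  push_cast
  rw [mul_pow, pow_mul (2 : ℝ) 2 n]
  norm_num
  ring

/-- `|T_{2n-1}|`, given by the Bernoulli formula. -/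
noncomputable def absTangent (n : ℕ) : ℝ :=
  2 ^ (2 * n) * (2 ^ (2 * n) - 1) * |((bernoulli (2 * n) : ℚ) : ℝ)| / (2 * n)

theorem hasSum_absTangent {n : ℕ} (hn : n ≠ 0) :
    HasSum (fun k : ℕ => 2 * (2 * n - 1)! * ((2 / ((2 * k + 1) * π)) ^ 2) ^ n) (absTangent n) := by
  have h2n : 2 * n ≠ 0 := by omega
  have hpi := pi_pos.ne'
  have hfact : ((2 * n)! : ℝ) = 2 * n * (2 * n - 1)! := by
    rw [← Nat.mul_factorial_pred h2n]; push_cast; ring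
  have hpow : (2 : ℝ) ^ (2 * n - 1) = 4 ^ n / 2 := by
    rw [eq_div_iff two_ne_zero, pow_sub_one_mul h2n, pow_mul]; norm_num
  have hval : absTangent n = 2 * (2 * n - 1)! * (4 / π ^ 2) ^ n *
      ((1 - 1 / 4 ^ n) * (2 ^ (2 * n - 1) * π ^ (2 * n) *
        |((bernoulli (2 * n) : ℚ) : ℝ)| / (2 * n)!)) := by
    rw [absTangent, hfact, hpow, pow_mul, pow_mul, div_pow]
    norm_num
    field_simp
  rw [hval]
  refine ((hasSum_one_div_odd_pow hn).mul_left _).congr_fun fun k => ?_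
  rw [show (2 / ((2 * k + 1) * π)) ^ 2 = 4 / π ^ 2 * (1 / (2 * k + 1) ^ 2) by field_simp; ring,
    mul_pow, one_div_pow, ← pow_mul]
  push_cast
  ring

theorem absTangent_pos {n : ℕ} (hn : n ≠ 0) : 0 < absTangent n :=
  lt_of_lt_of_le (by positivity) (le_hasSum (hasSum_absTangent hn) 0 fun _ _ => by positivity)

theorem absTangent_sq_le_mul {n : ℕ} (hn : n ≠ 0) :
    absTangent (n + 1) ^ 2 ≤ absTangent n * absTangent (n + 2) := by
  refine (hasSum_absTangent (n.succ_ne_zero)).sq_le_mul (hasSum_absTangent hn)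
    (hasSum_absTangent (by omega)) (fun _ => by positivity) (fun _ => by positivity) fun k => ?_
  rw [show 2 * (n + 1) - 1 = 2 * n - 1 + 2 by omega, show 2 * (n + 2) - 1 = 2 * n - 1 + 4 by omega]
  have hfact : ((2 * n - 1 + 2)! : ℝ) ^ 2 ≤ (2 * n - 1)! * (2 * n - 1 + 4)! := by
    exact_mod_cast Nat.sq_factorial_add_two_le (2 * n - 1)
  set x := (2 / ((2 * (k : ℝ) + 1) * π)) ^ 2
  have hx : 0 ≤ x := sq_nonneg _
  calc (2 * ((2 * n - 1 + 2)! : ℝ) * x ^ (n + 1)) ^ 2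
      = 4 * ((2 * n - 1 + 2)! : ℝ) ^ 2 * (x ^ n * x ^ (n + 2)) := by ring
    _ ≤ 4 * ((2 * n - 1)! * (2 * n - 1 + 4)!) * (x ^ n * x ^ (n + 2)) := by gcongr
    _ = _ := by ring

theorem absTangent_one : absTangent 1 = 1 := by
  rw [absTangent, bernoulli_eq_bernoulli'_of_ne_one (by norm_num), bernoulli'_two]
  norm_num

theorem absTangent_two : absTangent 2 = 2 := by
  rw [absTangent, bernoulli_eq_bernoulli'_of_ne_one (by norm_num), bernoulli'_four]
  norm_num

theorem strictMonoOn_div_of_convex {b : ℕ → ℝ}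
    (hb : ∀ n, 1 ≤ n → 2 * b (n + 1) ≤ b n + b (n + 2)) (hb₁ : b 1 ≤ 0) (hb₁₂ : b 1 < b 2) :
    StrictMonoOn (fun n : ℕ => b n / n) {n | 1 ≤ n} := by
  -- the increments `b (k + 1) - b k` increase, so `b n - b 1 ≤ (n - 1) (b (n + 1) - b n)`
  have key : ∀ n, 1 ≤ n → (n + 1) * b n < b 1 + n * b (n + 1) := by
    intro n hn
    induction n, hn using Nat.le_induction with
    | base => norm_num; linarith
    | succ n hn ih =>
      push_cast
      nlinarith [hb n hn, (by exact_mod_cast hn : (1 : ℝ) ≤ n)]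
  refine strictMonoOn_of_lt_add_one Set.ordConnected_Ici fun n _ hn _ => ?_
  have hn' : (0 : ℝ) < n := by exact_mod_cast hn
  rw [div_lt_div_iff₀ hn' (by positivity)]
  push_cast
  linarith [key n hn]

theorem strictMonoOn_rpow_inv_of_sq_le_mul {a : ℕ → ℝ} (ha : ∀ n, 1 ≤ n → 0 < a n)
    (ha_sq : ∀ n, 1 ≤ n → a (n + 1) ^ 2 ≤ a n * a (n + 2)) (ha₁ : a 1 ≤ 1) (ha₁₂ : a 1 < a 2) :
    StrictMonoOn (fun n : ℕ => a n ^ (n : ℝ)⁻¹) {n | 1 ≤ n} := by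
  have hconv : ∀ n, 1 ≤ n → 2 * log (a (n + 1)) ≤ log (a n) + log (a (n + 2)) := fun n hn =>
    calc 2 * log (a (n + 1)) = log (a (n + 1) ^ 2) := by rw [Real.log_pow]; norm_num
      _ ≤ log (a n * a (n + 2)) := log_le_log (pow_pos (ha _ (by omega)) 2) (ha_sq n hn)
      _ = log (a n) + log (a (n + 2)) := log_mul (ha n hn).ne' (ha _ (by omega)).ne'
  have hlog := strictMonoOn_div_of_convex (b := fun n => log (a n)) hconv
    (log_nonpos (ha 1 le_rfl).le ha₁) (log_lt_log (ha 1 le_rfl) ha₁₂)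
  refine (exp_strictMono.comp_strictMonoOn hlog).congr fun n hn => ?_
  rw [Function.comp_apply, rpow_def_of_pos (ha n hn), div_eq_mul_inv]

theorem tangent_root_strictMono (T : ℕ → ℝ)
    (hT : ∀ n : ℕ, 1 ≤ n →
      |T (2 * n - 1)| =
        2 ^ (2 * n) * (2 ^ (2 * n) - 1) * |((bernoulli (2 * n) : ℚ) : ℝ)| / (2 * n)) :
    StrictMonoOn (fun n : ℕ => |T (2 * n - 1)| ^ ((n : ℝ)⁻¹)) {n : ℕ | 1 ≤ n} := by
  refine (strictMonoOn_rpow_inv_of_sq_le_mul (a := absTangent)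
    (fun n hn => absTangent_pos (Nat.one_le_iff_ne_zero.mp hn))
    (fun n hn => absTangent_sq_le_mul (Nat.one_le_iff_ne_zero.mp hn)) absTangent_one.le
    (by rw [absTangent_one, absTangent_two]; norm_num)).congr fun n hn => ?_
  simp only [hT n hn, absTangent]
end

section
/- The sequence n ↦ |E_{2n}|^(1/n) is strictly increasing for all n ≥ 1, where E_k are the Euler numbers. -/
/-!
Let `U n = 4^(2n+1) (2n)! / π^(2n+1)` be the upper bound. Since the bounds are strict, it suffices
that `U n ^ (1/n) ≤ (U (n+1) / (1 + 3^(-2n-3))) ^ (1/(n+1))`.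
As `U (n+1) = U n · 16 (2n+1)(2n+2) / π²`, this amounts to
`4 (2n)! (1 + 3^(-2n-3))^n ≤ π ((2n+1)(2n+2))^n`, which follows from
`4 (2n)! ≤ ((2n+1)(2n+2))^n` and `(1 + 3^(-2n-3))^n ≤ (1 + 1/n)^n ≤ e < 3 < π`.
-/

open Real
open scoped Nat

theorem four_mul_factorial_two_mul_le {n : ℕ} (hn : 1 ≤ n) :
    4 * (2 * n)! ≤ ((2 * n + 1) * (2 * n + 2)) ^ n := by
  induction n, hn using Nat.le_induction with
  | base => decide
  | succ n _ ih =>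
    calc 4 * (2 * (n + 1))!
        = (2 * n + 1) * (2 * n + 2) * (4 * (2 * n)!) := by
          rw [show 2 * (n + 1) = 2 * n + 1 + 1 by ring, Nat.factorial_succ, Nat.factorial_succ]
          ring
      _ ≤ (2 * n + 1) * (2 * n + 2) * ((2 * n + 1) * (2 * n + 2)) ^ n := by gcongr
      _ = ((2 * n + 1) * (2 * n + 2)) ^ (n + 1) := by ring
      _ ≤ ((2 * (n + 1) + 1) * (2 * (n + 1) + 2)) ^ (n + 1) := by gcongr <;> omega

theorem one_add_pow_lt_three {c : ℝ} {n : ℕ} (hc₀ : 0 ≤ c) (hc : c ≤ (n : ℝ)⁻¹) :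
    (1 + c) ^ n < 3 := by
  calc (1 + c) ^ n ≤ (1 + (n : ℝ)⁻¹) ^ n := by gcongr
    _ ≤ exp 1 := one_add_inv_pow_le_exp
    _ < 3 := by linarith [exp_one_lt_d9]

theorem inv_three_pow_le_inv {n : ℕ} (hn : 0 < n) :
    ((3 : ℝ) ^ (2 * n + 3))⁻¹ ≤ (n : ℝ)⁻¹ := by
  gcongr
  calc (n : ℝ) ≤ 3 ^ n := by exact_mod_cast (Nat.lt_pow_self (by norm_num)).le
    _ ≤ 3 ^ (2 * n + 3) := pow_le_pow_right₀ (by norm_num) (by omega)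

theorem rpow_inv_le_rpow_inv_succ {A B : ℝ} (hA : 0 ≤ A) (hB : 0 ≤ B) {n : ℕ} (hn : 0 < n)
    (h : A ^ (n + 1) ≤ B ^ n) : A ^ (n : ℝ)⁻¹ ≤ B ^ ((n + 1 : ℕ) : ℝ)⁻¹ := by
  have hroot {C : ℝ} (hC : 0 ≤ C) {k m : ℕ} (hm : 0 < m) :
      C ^ (k : ℝ)⁻¹ = (C ^ m) ^ ((k * m : ℕ) : ℝ)⁻¹ := by
    rw [← rpow_natCast, ← rpow_mul hC]
    congr 1
    push_cast
    field_simp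
  rw [hroot hA n.succ_pos, hroot hB hn, mul_comm]
  gcongr

noncomputable def eulerUpperBound (n : ℕ) : ℝ :=
  4 ^ (2 * n + 1) * ((2 * n)! : ℝ) / π ^ (2 * n + 1)

theorem eulerUpperBound_pos (n : ℕ) : 0 < eulerUpperBound n := by
  unfold eulerUpperBound; positivity

theorem eulerUpperBound_succ (n : ℕ) :
    eulerUpperBound (n + 1) = eulerUpperBound n * (16 * ((2 * n + 1) * (2 * n + 2)) / π ^ 2) := by
  rw [eulerUpperBound, eulerUpperBound, show 2 * (n + 1) = 2 * n + 1 + 1 by ring,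
    Nat.factorial_succ, Nat.factorial_succ]
  push_cast
  field_simp
  ring

theorem eulerUpperBound_le_pow {n : ℕ} {M c : ℝ} (hM : 4 * ((2 * n)! : ℝ) ≤ M ^ n)
    (hc₀ : 0 ≤ c) (hc : (1 + c) ^ n ≤ 3) :
    eulerUpperBound n ≤ (16 * M / (π ^ 2 * (1 + c))) ^ n := by
  have hMn : 0 ≤ M ^ n := le_trans (by positivity) hM
  have key : 4 * ((2 * n)! : ℝ) * (1 + c) ^ n ≤ π * M ^ n :=
    calc 4 * ((2 * n)! : ℝ) * (1 + c) ^ n ≤ M ^ n * 3 := by gcongr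
      _ ≤ π * M ^ n := by rw [mul_comm]; gcongr; exact pi_gt_three.le
  rw [eulerUpperBound, div_pow, div_le_div_iff₀ (by positivity) (by positivity)]
  calc 4 ^ (2 * n + 1) * ((2 * n)! : ℝ) * (π ^ 2 * (1 + c)) ^ n
      = 16 ^ n * π ^ (2 * n) * (4 * ((2 * n)! : ℝ) * (1 + c) ^ n) := by
        rw [mul_pow, ← pow_mul, pow_succ, pow_mul]; ring
    _ ≤ 16 ^ n * π ^ (2 * n) * (π * M ^ n) := by gcongr
    _ = (16 * M) ^ n * π ^ (2 * n + 1) := by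
        rw [mul_pow, pow_succ, pow_mul]; ring

theorem eulerUpperBound_pow_succ_le {n : ℕ} (hn : 1 ≤ n) :
    eulerUpperBound n ^ (n + 1) ≤
      (eulerUpperBound (n + 1) / (1 + ((3 : ℝ) ^ (2 * (n + 1) + 1))⁻¹)) ^ n := by
  set c : ℝ := ((3 : ℝ) ^ (2 * (n + 1) + 1))⁻¹
  have hc₀ : 0 ≤ c := by positivity
  have hc : (1 + c) ^ n ≤ 3 := (one_add_pow_lt_three hc₀ (inv_three_pow_le_inv hn)).le
  have hM : 4 * ((2 * n)! : ℝ) ≤ ((2 * n + 1) * (2 * n + 2)) ^ n := by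
    exact_mod_cast four_mul_factorial_two_mul_le hn
  rw [eulerUpperBound_succ, pow_succ, mul_div_assoc, mul_pow, div_div]
  exact mul_le_mul_of_nonneg_left (eulerUpperBound_le_pow hM hc₀ hc)
    (pow_nonneg (eulerUpperBound_pos n).le _)

open Real in
theorem euler_root_strictMono (E : ℕ → ℝ)
    (hE : ∀ n : ℕ, 1 ≤ n →
      (4 ^ (2 * n + 1) * (Nat.factorial (2 * n) : ℝ) / π ^ (2 * n + 1)) /
          (1 + ((3 : ℝ) ^ (2 * n + 1))⁻¹) < |E (2 * n)| ∧
        |E (2 * n)| < 4 ^ (2 * n + 1) * (Nat.factorial (2 * n) : ℝ) / π ^ (2 * n + 1)) :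
    StrictMonoOn (fun n : ℕ => |E (2 * n)| ^ ((n : ℝ)⁻¹)) {n : ℕ | 1 ≤ n} := by
  refine strictMonoOn_of_lt_succ Set.ordConnected_Ici fun n _ (hn : 1 ≤ n) _ => ?_
  rw [Order.succ_eq_add_one]
  have hlower : 0 < eulerUpperBound (n + 1) / (1 + ((3 : ℝ) ^ (2 * (n + 1) + 1))⁻¹) :=
    div_pos (eulerUpperBound_pos _) (by positivity)
  calc |E (2 * n)| ^ (n : ℝ)⁻¹ < eulerUpperBound n ^ (n : ℝ)⁻¹ :=
        rpow_lt_rpow (abs_nonneg _) (hE n hn).2 (by positivity)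
    _ ≤ (eulerUpperBound (n + 1) / (1 + ((3 : ℝ) ^ (2 * (n + 1) + 1))⁻¹)) ^
          ((n + 1 : ℕ) : ℝ)⁻¹ :=
        rpow_inv_le_rpow_inv_succ (eulerUpperBound_pos n).le hlower.le hn
          (eulerUpperBound_pow_succ_le hn)
    _ < |E (2 * (n + 1))| ^ ((n + 1 : ℕ) : ℝ)⁻¹ :=
        rpow_lt_rpow hlower.le (hE (n + 1) (by omega)).1 (by positivity)
end

section
/- The sequence n ↦ |E_{2n+2}|^(1/(n+1)) / |E_{2n}|^(1/n) is strictly decreasing for all n ≥ 1, where E_k are the Euler numbers. -/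
/-!
Write `B n = |E (2 n)|` and `g n = B n ^ (1 / n)`; the sequence is `g (n + 1) / g n`, so it is
enough that `g` is strictly log-concave, `g (n + 2) g n < g (n + 1) ^ 2`. Raised to the power
`n (n + 1) (n + 2)` this reads `B (n + 2) ^ (n (n + 1)) B n ^ ((n + 1) (n + 2)) < B (n + 1) ^ (2 n (n + 2))`.
Bounding `B (n + 2)`, `B n` from above and `B (n + 1)` from below, the powers of `π` and the
factorials almost cancel, and what is left is
`(4 / π)² ((2n)!)² ((2n+3)(2n+4))^(n(n+1)) (1 + 3^(-2n-3))^(2n(n+2)) ≤ ((2n+1)(2n+2))^(n(n+3))`.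
The factors involving `π` and `3^(-2n-3)` are below `5 / 3`, which leaves an inequality between
integers. It is checked directly for `n ≤ 4`; beyond, `k! ≤ ((k + 1) / 2) ^ k` and
`(1 + x) ^ m ≤ exp (m x)` leave `5 · 9 ^ (n + 1) ≤ 3 · 16 ^ n`.
-/

open Real
open scoped Nat

open Finset in
theorem Nat.factorial_sq_mul_four_pow_le (k : ℕ) : k ! ^ 2 * 4 ^ k ≤ (k + 1) ^ (2 * k) := by
  have hrev : ∏ i ∈ range k, (k - i) = k ! := by
    rw [← prod_range_add_one_eq_factorial, ← prod_range_reflect]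
    exact prod_congr rfl fun i hi => by have := mem_range.1 hi; omega
  -- AM-GM on the pairs `(i + 1, k - i)`
  calc k ! ^ 2 * 4 ^ k = ∏ i ∈ range k, 4 * ((i + 1) * (k - i)) := by
        rw [prod_mul_distrib, prod_mul_distrib, prod_const, card_range, hrev,
          prod_range_add_one_eq_factorial]
        ring
    _ ≤ ∏ _i ∈ range k, (k + 1) ^ 2 := by
        refine prod_le_prod' fun i hi => ?_
        obtain ⟨j, rfl⟩ := Nat.exists_eq_add_of_lt (mem_range.1 hi)
        rw [show i + j + 1 - i = j + 1 by omega]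
        nlinarith [sq_nonneg ((i : ℤ) - j)]
    _ = (k + 1) ^ (2 * k) := by rw [prod_const, card_range, ← pow_mul, mul_comm]

theorem Nat.factorial_two_mul_succ (n : ℕ) :
    (2 * (n + 1))! = (2 * n)! * ((2 * n + 1) * (2 * n + 2)) := by
  rw [show 2 * (n + 1) = 2 * n + 1 + 1 by ring, Nat.factorial_succ, Nat.factorial_succ]; ring

theorem Real.one_add_pow_le_exp_mul {x : ℝ} (hx : -1 ≤ x) (m : ℕ) :
    (1 + x) ^ m ≤ exp (m * x) := by
  rw [exp_nat_mul]
  exact pow_le_pow_left₀ (by linarith) (by linarith [add_one_le_exp x]) m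

theorem strictAntiOn_succ_div_of_mul_lt_sq {g : ℕ → ℝ} {a : ℕ} (hpos : ∀ n, a ≤ n → 0 < g n)
    (h : ∀ n, a ≤ n → g (n + 2) * g n < g (n + 1) ^ 2) :
    StrictAntiOn (fun n => g (n + 1) / g n) (Set.Ici a) := by
  refine strictAntiOn_of_succ_lt Set.ordConnected_Ici fun n _ hn _ => ?_
  have hn : a ≤ n := hn
  simp only [Order.succ_eq_add_one]
  rw [div_lt_div_iff₀ (hpos _ (by omega)) (hpos _ hn)]
  linarith [h n hn]

theorem rpow_inv_mul_rpow_inv_lt_sq {a b c : ℝ} (ha : 0 ≤ a) (hb : 0 ≤ b) (hc : 0 ≤ c)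
    {n : ℕ} (hn : n ≠ 0)
    (h : c ^ (n * (n + 1)) * a ^ ((n + 1) * (n + 2)) < b ^ (2 * n * (n + 2))) :
    c ^ ((n + 2 : ℕ) : ℝ)⁻¹ * a ^ (n : ℝ)⁻¹ < (b ^ ((n + 1 : ℕ) : ℝ)⁻¹) ^ 2 := by
  set α := a ^ (n : ℝ)⁻¹
  set β := b ^ ((n + 1 : ℕ) : ℝ)⁻¹
  set γ := c ^ ((n + 2 : ℕ) : ℝ)⁻¹
  have hα : α ^ n = a := rpow_inv_natCast_pow ha hn
  have hβ : β ^ (n + 1) = b := rpow_inv_natCast_pow hb n.succ_ne_zero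
  have hγ : γ ^ (n + 2) = c := rpow_inv_natCast_pow hc (by omega)
  refine lt_of_pow_lt_pow_left₀ (n * (n + 1) * (n + 2)) (by positivity) ?_
  calc (γ * α) ^ (n * (n + 1) * (n + 2)) = c ^ (n * (n + 1)) * a ^ ((n + 1) * (n + 2)) := by
        rw [← hα, ← hγ]; ring
    _ < b ^ (2 * n * (n + 2)) := h
    _ = (β ^ 2) ^ (n * (n + 1) * (n + 2)) := by rw [← hβ]; ring

theorem pow_mul_pow_le_div_pow {p F c d y : ℝ} (hp : 0 ≤ p) (hF : 0 ≤ F) (hd : 0 ≤ d)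
    (hy : 0 < y) (n : ℕ)
    (h : p ^ 2 * F ^ 2 * c ^ (n * (n + 1)) * y ^ (2 * n * (n + 2)) ≤ d ^ (n * (n + 3))) :
    (p ^ (2 * n + 5) * (F * d * c)) ^ (n * (n + 1)) * (p ^ (2 * n + 1) * F) ^ ((n + 1) * (n + 2))
      ≤ (p ^ (2 * n + 3) * (F * d) / y) ^ (2 * n * (n + 2)) := by
  rw [div_pow, le_div_iff₀ (by positivity)]
  calc (p ^ (2 * n + 5) * (F * d * c)) ^ (n * (n + 1)) * (p ^ (2 * n + 1) * F) ^ ((n + 1) * (n + 2))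
        * y ^ (2 * n * (n + 2))
      = p ^ ((2 * n + 3) * (2 * n * (n + 2))) * F ^ (2 * n * (n + 2)) * d ^ (n * (n + 1))
        * (p ^ 2 * F ^ 2 * c ^ (n * (n + 1)) * y ^ (2 * n * (n + 2))) := by ring
    _ ≤ p ^ ((2 * n + 3) * (2 * n * (n + 2))) * F ^ (2 * n * (n + 2)) * d ^ (n * (n + 1))
        * d ^ (n * (n + 3)) := by gcongr
    _ = (p ^ (2 * n + 3) * (F * d)) ^ (2 * n * (n + 2)) := by ring

theorem eighty_mul_le_three_pow (n : ℕ) : 80 * (n * (n + 2)) ≤ 3 ^ (2 * n + 3) := by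
  induction n with
  | zero => norm_num
  | succ n ih =>
    rcases n with _ | n
    · norm_num
    · rw [show 2 * (n + 1 + 1) + 3 = 2 * (n + 1) + 3 + 2 by ring, pow_add]
      nlinarith

theorem five_mul_nine_pow_le {n : ℕ} (hn : 5 ≤ n) : 5 * 9 ^ (n + 1) ≤ 3 * 16 ^ n := by
  induction n, hn using Nat.le_induction with
  | base => norm_num
  | succ n _ ih => rw [pow_succ, pow_succ]; lia

theorem two_mul_add_three_mul_add_four_pow_le (n : ℕ) :
    ((2 * n + 3) * (2 * n + 4)) ^ (n * (n + 1)) ≤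
      9 ^ (n + 1) * ((2 * n + 1) * (2 * n + 2)) ^ (n * (n + 1)) := by
  set d : ℝ := (2 * n + 1) * (2 * n + 2) with hd
  have hd0 : 0 < d := by positivity
  have hx : ((2 * n + 3) * (2 * n + 4) : ℝ) = d * (1 + (8 * n + 10) / d) := by
    field_simp; ring
  have hexp : ((n * (n + 1) : ℕ) : ℝ) * ((8 * n + 10) / d) ≤ (n + 1 : ℕ) * 2 := by
    rw [mul_div_assoc', div_le_iff₀ hd0]; push_cast; nlinarith
  have key : ((2 * n + 3) * (2 * n + 4) : ℝ) ^ (n * (n + 1)) ≤ 9 ^ (n + 1) * d ^ (n * (n + 1)) :=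
    calc ((2 * n + 3) * (2 * n + 4) : ℝ) ^ (n * (n + 1))
        = d ^ (n * (n + 1)) * (1 + (8 * n + 10) / d) ^ (n * (n + 1)) := by rw [hx, mul_pow]
      _ ≤ d ^ (n * (n + 1)) * exp ((n + 1 : ℕ) * 2) := by
        gcongr
        exact (one_add_pow_le_exp_mul (by linarith [show 0 ≤ (8 * n + 10) / d by positivity]) _).trans
          (exp_le_exp.2 hexp)
      _ ≤ d ^ (n * (n + 1)) * 9 ^ (n + 1) := by
        rw [exp_nat_mul]
        gcongr
        calc exp 2 = exp 1 ^ 2 := by rw [← exp_nat_mul]; norm_num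
          _ ≤ 3 ^ 2 := by gcongr; exact exp_one_lt_three.le
          _ = 9 := by norm_num
      _ = 9 ^ (n + 1) * d ^ (n * (n + 1)) := mul_comm _ _
  rw [hd] at key
  exact_mod_cast key

theorem factorial_two_mul_sq_mul_pow_le {n : ℕ} (hn : 1 ≤ n) :
    5 * (2 * n)! ^ 2 * ((2 * n + 3) * (2 * n + 4)) ^ (n * (n + 1)) ≤
      3 * ((2 * n + 1) * (2 * n + 2)) ^ (n * (n + 3)) := by
  rcases le_or_gt n 4 with hn4 | hn5
  · interval_cases n <;> decide
  set d := (2 * n + 1) * (2 * n + 2)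
  refine Nat.le_of_mul_le_mul_left ?_ (pow_pos (by norm_num : 0 < 16) n)
  calc 16 ^ n * (5 * (2 * n)! ^ 2 * ((2 * n + 3) * (2 * n + 4)) ^ (n * (n + 1)))
      = 5 * ((2 * n)! ^ 2 * 4 ^ (2 * n)) * ((2 * n + 3) * (2 * n + 4)) ^ (n * (n + 1)) := by
        rw [show 16 ^ n = 4 ^ (2 * n) by rw [pow_mul]; norm_num]; ring
    _ ≤ 5 * (2 * n + 1) ^ (2 * (2 * n)) * (9 ^ (n + 1) * d ^ (n * (n + 1))) := by
        gcongr
        · exact Nat.factorial_sq_mul_four_pow_le _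
        · exact two_mul_add_three_mul_add_four_pow_le n
    _ = 5 * 9 ^ (n + 1) * ((2 * n + 1) ^ 2) ^ (2 * n) * d ^ (n * (n + 1)) := by
        rw [pow_mul]; ring
    _ ≤ 3 * 16 ^ n * d ^ (2 * n) * d ^ (n * (n + 1)) := by
        gcongr ?_ * ?_ ^ _ * _
        · exact five_mul_nine_pow_le hn5
        · rw [sq]; exact Nat.mul_le_mul_left _ (by omega)
    _ = 16 ^ n * (3 * d ^ (n * (n + 3))) := by
        rw [show n * (n + 3) = 2 * n + n * (n + 1) by ring, pow_add]; ring

theorem one_add_inv_three_pow_pow_le (n : ℕ) :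
    (1 + ((3 : ℝ) ^ (2 * n + 3))⁻¹) ^ (2 * n * (n + 2)) ≤ 40 / 39 := by
  set δ : ℝ := ((3 : ℝ) ^ (2 * n + 3))⁻¹
  have hδ : 0 ≤ δ := by positivity
  have hsmall : ((2 * n * (n + 2) : ℕ) : ℝ) * δ ≤ 1 / 40 := by
    have h : (80 * (n * (n + 2)) : ℝ) ≤ 3 ^ (2 * n + 3) := by
      exact_mod_cast eighty_mul_le_three_pow n
    rw [mul_inv_le_iff₀ (by positivity)]
    push_cast
    linarith
  calc (1 + δ) ^ (2 * n * (n + 2)) ≤ exp ((2 * n * (n + 2) : ℕ) * δ) :=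
        one_add_pow_le_exp_mul (by linarith) _
    _ ≤ 1 / (1 - (2 * n * (n + 2) : ℕ) * δ) :=
        exp_bound_div_one_sub_of_interval (by positivity) (by linarith)
    _ ≤ 40 / 39 := by
        rw [div_le_div_iff₀ (by linarith) (by norm_num)]; linarith

theorem four_div_pi_sq_mul_le (n : ℕ) :
    (4 / π) ^ 2 * (1 + ((3 : ℝ) ^ (2 * n + 3))⁻¹) ^ (2 * n * (n + 2)) ≤ 5 / 3 :=
  calc (4 / π) ^ 2 * (1 + ((3 : ℝ) ^ (2 * n + 3))⁻¹) ^ (2 * n * (n + 2))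
      ≤ (4 / 3.14) ^ 2 * (40 / 39) := by
        gcongr
        · exact pi_gt_d2.le
        · exact one_add_inv_three_pow_pow_le n
    _ ≤ 5 / 3 := by norm_num

noncomputable def eulerMajorant (n : ℕ) : ℝ :=
  4 ^ (2 * n + 1) * (Nat.factorial (2 * n) : ℝ) / π ^ (2 * n + 1)

theorem eulerMajorant_pos (n : ℕ) : 0 < eulerMajorant n := by
  unfold eulerMajorant; positivity

theorem eulerMajorant_eq (n : ℕ) : eulerMajorant n = (4 / π) ^ (2 * n + 1) * (2 * n)! := by
  rw [eulerMajorant, div_pow]; ring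

theorem eulerMajorant_pow_mul_pow_le {n : ℕ} (hn : 1 ≤ n) :
    eulerMajorant (n + 2) ^ (n * (n + 1)) * eulerMajorant n ^ ((n + 1) * (n + 2)) ≤
      (eulerMajorant (n + 1) / (1 + ((3 : ℝ) ^ (2 * (n + 1) + 1))⁻¹)) ^ (2 * n * (n + 2)) := by
  have hnum : (5 * (2 * n)! ^ 2 * ((2 * n + 3) * (2 * n + 4)) ^ (n * (n + 1)) : ℝ) ≤
      3 * ((2 * n + 1) * (2 * n + 2)) ^ (n * (n + 3)) := by
    exact_mod_cast factorial_two_mul_sq_mul_pow_le hn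
  set F : ℝ := (((2 * n)! : ℕ) : ℝ)
  set d : ℝ := (2 * n + 1) * (2 * n + 2)
  set c : ℝ := (2 * n + 3) * (2 * n + 4)
  have h1 : eulerMajorant (n + 1) = (4 / π) ^ (2 * n + 3) * (F * d) := by
    rw [eulerMajorant_eq, Nat.factorial_two_mul_succ]; push_cast; ring
  have h2 : eulerMajorant (n + 2) = (4 / π) ^ (2 * n + 5) * (F * d * c) := by
    rw [eulerMajorant_eq, Nat.factorial_two_mul_succ, Nat.factorial_two_mul_succ]
    push_cast; ring
  rw [h1, h2, eulerMajorant_eq, show 2 * (n + 1) + 1 = 2 * n + 3 by ring]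
  refine pow_mul_pow_le_div_pow (by positivity) (by positivity) (by positivity) (by positivity) n ?_
  calc (4 / π) ^ 2 * F ^ 2 * c ^ (n * (n + 1)) * (1 + ((3 : ℝ) ^ (2 * n + 3))⁻¹) ^ (2 * n * (n + 2))
      = ((4 / π) ^ 2 * (1 + ((3 : ℝ) ^ (2 * n + 3))⁻¹) ^ (2 * n * (n + 2)))
        * (F ^ 2 * c ^ (n * (n + 1))) := by ring
    _ ≤ 5 / 3 * (F ^ 2 * c ^ (n * (n + 1))) := by gcongr; exact four_div_pi_sq_mul_le n
    _ ≤ d ^ (n * (n + 3)) := by linarith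

open Real in
theorem euler_root_ratio_strictAnti (E : ℕ → ℝ)
    (hE : ∀ n : ℕ, 1 ≤ n →
      (4 ^ (2 * n + 1) * (Nat.factorial (2 * n) : ℝ) / π ^ (2 * n + 1)) /
          (1 + ((3 : ℝ) ^ (2 * n + 1))⁻¹) < |E (2 * n)| ∧
        |E (2 * n)| < 4 ^ (2 * n + 1) * (Nat.factorial (2 * n) : ℝ) / π ^ (2 * n + 1)) :
    StrictAntiOn
      (fun n : ℕ =>
        |E (2 * n + 2)| ^ (((n : ℝ) + 1)⁻¹) / |E (2 * n)| ^ ((n : ℝ)⁻¹))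
      {n : ℕ | 1 ≤ n} := by
  have hpos : ∀ n, 1 ≤ n → 0 < |E (2 * n)| := fun n hn =>
    (div_pos (eulerMajorant_pos n) (by positivity)).trans (hE n hn).1
  set g : ℕ → ℝ := fun n => |E (2 * n)| ^ (n : ℝ)⁻¹
  have hg : (fun n : ℕ => |E (2 * n + 2)| ^ (((n : ℝ) + 1)⁻¹) / |E (2 * n)| ^ ((n : ℝ)⁻¹)) =
      fun n => g (n + 1) / g n := by
    funext n; simp only [g]; push_cast; ring_nf
  rw [hg]
  refine strictAntiOn_succ_div_of_mul_lt_sq (fun n hn => rpow_pos_of_pos (hpos n hn) _)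
    fun n hn => rpow_inv_mul_rpow_inv_lt_sq (abs_nonneg _) (abs_nonneg _) (abs_nonneg _)
      (by omega) ?_
  calc |E (2 * (n + 2))| ^ (n * (n + 1)) * |E (2 * n)| ^ ((n + 1) * (n + 2))
      < eulerMajorant (n + 2) ^ (n * (n + 1)) * eulerMajorant n ^ ((n + 1) * (n + 2)) := by
        gcongr
        · exact (hE (n + 2) (by omega)).2
        · exact (hE n hn).2
    _ ≤ (eulerMajorant (n + 1) / (1 + ((3 : ℝ) ^ (2 * (n + 1) + 1))⁻¹)) ^ (2 * n * (n + 2)) :=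
        eulerMajorant_pow_mul_pow_le hn
    _ < |E (2 * (n + 1))| ^ (2 * n * (n + 2)) := by
        gcongr
        · exact (div_pos (eulerMajorant_pos _) (by positivity)).le
        · exact (hE (n + 1) (by omega)).1
end

section
/- For every natural number n ≥ 1, log((n+2))/(n+2) - 2·log(n+1)/(n+1) + log(n)/n ≤ (2·log n + 4)/(n(n+1)(n+2)). -/
/-!
Put `L k = log (x + k)` and `D = x (x + 1) (x + 2)`. Clearing denominators,
`D · (L 2 / (x + 2) - 2 L 1 / (x + 1) + L 0 / x) = x (x + 1) (L 0 + L 2 - 2 L 1) - 2 x (L 1 - L 0) + 2 L 0`.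
By concavity of `log` (here just `x (x + 2) ≤ (x + 1) ^ 2`) the first term is nonpositive, and by
monotonicity of `log` so is the second; hence the second difference is at most `2 log x / D`
for every real `x > 0`.
-/

namespace Real

lemma log_add_log_add_two_le {x : ℝ} (hx : 0 < x) :
    log x + log (x + 2) ≤ 2 * log (x + 1) := by
  calc log x + log (x + 2) = log (x * (x + 2)) := (log_mul hx.ne' (by positivity)).symm
    _ ≤ log ((x + 1) ^ 2) := log_le_log (by positivity) (by nlinarith)
    _ = 2 * log (x + 1) := by rw [log_pow]; norm_num

lemma log_div_second_diff_le {x : ℝ} (hx : 0 < x) :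
    log (x + 2) / (x + 2) - 2 * log (x + 1) / (x + 1) + log x / x ≤
      2 * log x / (x * (x + 1) * (x + 2)) := by
  have hconc : 0 ≤ 2 * log (x + 1) - log x - log (x + 2) := by
    linarith [log_add_log_add_two_le hx]
  have hmono : 0 ≤ log (x + 1) - log x := sub_nonneg.2 (log_le_log hx (by linarith))
  have hgap : 2 * log x / (x * (x + 1) * (x + 2)) -
      (log (x + 2) / (x + 2) - 2 * log (x + 1) / (x + 1) + log x / x) =
      (x * (x + 1) * (2 * log (x + 1) - log x - log (x + 2)) + 2 * x * (log (x + 1) - log x)) /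
        (x * (x + 1) * (x + 2)) := by
    field_simp
    ring
  have : 0 ≤ 2 * log x / (x * (x + 1) * (x + 2)) -
      (log (x + 2) / (x + 2) - 2 * log (x + 1) / (x + 1) + log x / x) := by
    rw [hgap]; positivity
  linarith

end Real

theorem log_second_diff_le (n : ℕ) (hn : 1 ≤ n) :
    Real.log ((n : ℝ) + 2) / ((n : ℝ) + 2) - 2 * Real.log ((n : ℝ) + 1) / ((n : ℝ) + 1) +
        Real.log n / n ≤
      (2 * Real.log n + 4) / ((n : ℝ) * ((n : ℝ) + 1) * ((n : ℝ) + 2)) := by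
  have hx : (0 : ℝ) < n := by exact_mod_cast hn
  calc _ ≤ 2 * Real.log n / ((n : ℝ) * ((n : ℝ) + 1) * ((n : ℝ) + 2)) :=
        Real.log_div_second_diff_le hx
    _ ≤ _ := by gcongr; linarith
end

section
/- There exists n₀ such that the sequence of Motzkin numbers satisfies: (M_n^{1/n})_{n ≥ n₀} is strictly increasing. -/
/-- The `n`-th Motzkin number `M_n = ∑_{k=0}^{⌊n/2⌋} C(n,2k) C(2k,k)/(k+1)`. -/
def motzkin (n : ℕ) : ℚ :=
  ∑ k ∈ Finset.range (n / 2 + 1),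
    (n.choose (2 * k) : ℚ) * ((2 * k).choose k : ℚ) / ((k : ℚ) + 1)

/-!
Writing the summand as `n.descFactorial (2k) / (k! (k+1)!)`, Zeilberger's certificate
`G n k = -4k C(n+2, 2k) C(2k, k) / (n+2)` telescopes the sum into the recurrence
`(n + 4) M (n + 2) = (2n + 5) M (n + 1) + (3n + 3) M n`. Along this recurrence the ratio
`M (n + 1) / M n` stays between `(6n + 3) / (2n + 4)` and `(6n + 12) / (2n + 7)` for `n ≥ 2`
(both bounds tend to `3`), and the upper bound makes `M` log-convex. For a positive log-convex
sequence the inequality `a n ^ (n + 1) < a (n + 1) ^ n` passes from `n` to `n + 1`; it holds at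
`n = 1` because `M 1 = 1 < 2 = M 2`, and taking `n (n + 1)`-th roots of it gives
`M n ^ (1 / n) < M (n + 1) ^ (1 / (n + 1))` for all `n ≥ 1`.
-/

open Finset
open scoped Nat

lemma Nat.cast_descFactorial_add_one {R : Type*} [Ring R] (n k : ℕ) :
    (n.descFactorial (k + 1) : R) = n.descFactorial k * ((n : R) - k) := by
  rw [← descPochhammer_eval_eq_descFactorial, ← descPochhammer_eval_eq_descFactorial,
    descPochhammer_succ_eval]

theorem pow_succ_lt_pow_of_sq_le_mul {R : Type*} [CommRing R] [LinearOrder R]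
    [IsStrictOrderedRing R] {a : ℕ → R} (hpos : ∀ n, 0 < a n)
    (hconv : ∀ n, a (n + 1) ^ 2 ≤ a n * a (n + 2)) {k : ℕ}
    (hk : a k ^ (k + 1) < a (k + 1) ^ k) {n : ℕ} (hn : k ≤ n) :
    a n ^ (n + 1) < a (n + 1) ^ n := by
  induction n, hn using Nat.le_induction with
  | base => exact hk
  | succ n _ ih =>
    refine lt_of_mul_lt_mul_left ?_ (pow_nonneg (hpos (n + 1)).le n)
    calc a (n + 1) ^ n * a (n + 1) ^ (n + 2) = (a (n + 1) ^ 2) ^ (n + 1) := by ring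
      _ ≤ (a n * a (n + 2)) ^ (n + 1) := pow_le_pow_left₀ (sq_nonneg _) (hconv n) _
      _ = a n ^ (n + 1) * a (n + 2) ^ (n + 1) := mul_pow _ _ _
      _ < a (n + 1) ^ n * a (n + 2) ^ (n + 1) :=
        mul_lt_mul_of_pos_right ih (pow_pos (hpos _) _)

theorem Real.rpow_inv_natCast_lt_of_pow_lt {x y : ℝ} (hx : 0 ≤ x) (hy : 0 ≤ y) {p q : ℕ}
    (hp : p ≠ 0) (hq : q ≠ 0) (h : x ^ p < y ^ q) : x ^ (q⁻¹ : ℝ) < y ^ (p⁻¹ : ℝ) := by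
  refine lt_of_pow_lt_pow_left₀ (q * p) (Real.rpow_nonneg hy _) ?_
  rwa [pow_mul, Real.rpow_inv_natCast_pow hx hq, mul_comm, pow_mul,
    Real.rpow_inv_natCast_pow hy hp]

def motzkinTerm (n k : ℕ) : ℚ := n.descFactorial (2 * k) / (k ! * (k + 1)!)

lemma choose_mul_choose_div_eq_motzkinTerm (n k : ℕ) :
    (n.choose (2 * k) : ℚ) * ((2 * k).choose k : ℚ) / ((k : ℚ) + 1) = motzkinTerm n k := by
  have hdesc := Nat.descFactorial_eq_factorial_mul_choose n (2 * k)
  have hcentral := Nat.choose_mul_factorial_mul_factorial (show k ≤ 2 * k by omega)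
  rw [show 2 * k - k = k by omega] at hcentral
  rw [motzkinTerm, hdesc, ← hcentral, Nat.factorial_succ]
  push_cast
  field_simp

lemma motzkin_eq_sum_motzkinTerm {n N : ℕ} (hN : n / 2 < N) :
    motzkin n = ∑ k ∈ range N, motzkinTerm n k := by
  rw [motzkin]
  simp_rw [choose_mul_choose_div_eq_motzkinTerm]
  refine sum_subset (range_subset_range.2 hN) fun k _ hk => ?_
  simp only [mem_range, not_lt] at hk
  simp [motzkinTerm, Nat.descFactorial_eq_zero_iff_lt.2 (show n < 2 * k by omega)]

def motzkinCert (n k : ℕ) : ℚ :=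
  -4 * k * (n + 2).descFactorial (2 * k) / ((n + 2) * k ! * k !)

lemma motzkinTerm_recurrence_eq_sub (n k : ℕ) :
    (n + 4) * motzkinTerm (n + 2) k - (2 * n + 5) * motzkinTerm (n + 1) k
      - (3 * n + 3) * motzkinTerm n k = motzkinCert n (k + 1) - motzkinCert n k := by
  cases k with
  | zero =>
    simp [motzkinTerm, motzkinCert]
    field_simp
    ring
  | succ j =>
    -- everything becomes a polynomial multiple of `n.descFactorial (2 * j)`
    simp only [motzkinTerm, motzkinCert, show 2 * (j + 1) = 2 * j + 1 + 1 by ring,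
      show 2 * (j + 1 + 1) = 2 * j + 1 + 1 + 1 + 1 by ring, Nat.succ_descFactorial_succ,
      Nat.factorial_succ]
    push_cast [Nat.cast_descFactorial_add_one]
    field_simp
    ring

lemma motzkin_recurrence (n : ℕ) :
    (n + 4) * motzkin (n + 2) = (2 * n + 5) * motzkin (n + 1) + (3 * n + 3) * motzkin n := by
  set N := n / 2 + 2
  rw [motzkin_eq_sum_motzkinTerm (N := N) (by omega),
    motzkin_eq_sum_motzkinTerm (N := N) (by omega),
    motzkin_eq_sum_motzkinTerm (N := N) (by omega), mul_sum, mul_sum, mul_sum, ← sub_eq_zero,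
    sub_add_eq_sub_sub, ← sum_sub_distrib, ← sum_sub_distrib,
    sum_congr rfl fun k _ => motzkinTerm_recurrence_eq_sub n k, sum_range_sub]
  simp [motzkinCert, Nat.descFactorial_eq_zero_iff_lt.2 (show n + 2 < 2 * N by omega)]

lemma motzkin_pos (n : ℕ) : 0 < motzkin n :=
  sum_pos' (fun k _ => by positivity) ⟨0, by simp, by simp⟩

lemma motzkin_zero : motzkin 0 = 1 := by norm_num [motzkin]

lemma motzkin_one : motzkin 1 = 1 := by norm_num [motzkin, sum_range_succ]

lemma motzkin_two : motzkin 2 = 2 := by norm_num [motzkin, sum_range_succ]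

lemma motzkin_three : motzkin 3 = 4 := by norm_num [motzkin, sum_range_succ]

lemma motzkin_ratio_bounds {n : ℕ} (hn : 2 ≤ n) :
    (6 * n + 3) * motzkin n ≤ (2 * n + 4) * motzkin (n + 1) ∧
      (2 * n + 7) * motzkin (n + 1) ≤ (6 * n + 12) * motzkin n := by
  induction n, hn using Nat.le_induction with
  | base => norm_num [motzkin_two, motzkin_three]
  | succ m hm ih =>
    obtain ⟨hlower, hupper⟩ := ih
    have hrec := motzkin_recurrence m
    have hm' : (2 : ℚ) ≤ m := by exact_mod_cast hm
    have h0 := motzkin_pos m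
    have h1 := motzkin_pos (m + 1)
    push_cast
    constructor
    · nlinarith [mul_le_mul_of_nonneg_left hupper
        (by positivity : (0 : ℚ) ≤ (2 * m + 6) * (3 * m + 3))]
    · nlinarith [mul_le_mul_of_nonneg_left hlower
        (by positivity : (0 : ℚ) ≤ 2 * m ^ 2 + 14 * m + 27)]

lemma motzkin_sq_le_mul (n : ℕ) : motzkin (n + 1) ^ 2 ≤ motzkin n * motzkin (n + 2) := by
  rcases lt_or_ge n 2 with hn | hn
  · interval_cases n <;> norm_num [motzkin_zero, motzkin_one, motzkin_two, motzkin_three]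
  have hn' : (2 : ℚ) ≤ n := by exact_mod_cast hn
  set gap := (6 * n + 12) * motzkin n - (2 * n + 7) * motzkin (n + 1)
  have hgap : 0 ≤ gap := sub_nonneg.2 (motzkin_ratio_bounds hn).2
  have key : (2 * n + 7) ^ 2 * (n + 4) * (motzkin n * motzkin (n + 2) - motzkin (n + 1) ^ 2)
      = (n + 4) * (2 * n + 7) * gap * motzkin (n + 1)
        + (2 * n ^ 2 + 12 * n + 13) * gap * motzkin n + (9 * n - 9) * motzkin n ^ 2 := by
    linear_combination (2 * n + 7) ^ 2 * motzkin n * motzkin_recurrence n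
  have h0 := motzkin_pos n
  have h1 := motzkin_pos (n + 1)
  have h9 : (0 : ℚ) ≤ 9 * n - 9 := by linarith
  have hprod : 0 ≤ (2 * (n : ℚ) + 7) ^ 2 * (n + 4) *
      (motzkin n * motzkin (n + 2) - motzkin (n + 1) ^ 2) := by
    rw [key]
    positivity
  linarith [nonneg_of_mul_nonneg_right hprod (by positivity)]

lemma motzkin_pow_succ_lt_pow {n : ℕ} (hn : 1 ≤ n) :
    motzkin n ^ (n + 1) < motzkin (n + 1) ^ n :=
  pow_succ_lt_pow_of_sq_le_mul motzkin_pos motzkin_sq_le_mul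
    (by norm_num [motzkin_one, motzkin_two]) hn

theorem motzkin_root_eventually_strictMono :
    ∃ n₀ : ℕ, StrictMonoOn (fun n : ℕ => ((motzkin n : ℝ)) ^ ((n : ℝ)⁻¹))
      {n : ℕ | n₀ ≤ n} := by
  refine ⟨1, strictMonoOn_of_lt_add_one Set.ordConnected_Ici fun n _ hn _ => ?_⟩
  have hM (m : ℕ) : (0 : ℝ) ≤ motzkin m := by exact_mod_cast (motzkin_pos m).le
  exact Real.rpow_inv_natCast_lt_of_pow_lt (hM n) (hM (n + 1)) n.succ_ne_zero
    (Nat.one_le_iff_ne_zero.1 hn) (by exact_mod_cast motzkin_pow_succ_lt_pow hn)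
end

section
/- There exists n₀ such that the sequence of central Delannoy numbers d_n = ∑_{k=0}^n C(n,k) C(n+k,k) satisfies: (d_{n+1}^{1/(n+1)} / d_n^{1/n})_{n ≥ n₀} is strictly decreasing. -/
/-!
Write `L n = log d_n` and `g n = L (n+1) / (n+1) - L n / n`, so that the ratio in question is
`exp (g n)`. Clearing denominators,
`n (n+1) (n+2) (g n - g (n+1)) = 2n (L (n+1) - L n) - n (n+1) Δ²L n - 2 L n`.
With `α = 3 + 2√2`, the recurrence `(n+2) d_{n+2} + (n+1) d_n = 3 (2n+3) d_{n+1}` yields,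
by induction, `α (1 - 1/(2n)) ≤ d_{n+1} / d_n ≤ α (1 - 1/(2n) + 1/n²)`. Hence
`L (n+1) - L n ≥ log α - 1/n`, `Δ²L n ≤ 2 / (n (n+1))` and `d_n ≤ α^n / √n`, which together
bound the right-hand side below by `log n - 4`.
-/

/-- The `n`-th central Delannoy number `d_n = ∑_{k=0}^{n} C(n,k) C(n+k,k)`. -/
def delannoy (n : ℕ) : ℕ :=
  ∑ k ∈ Finset.range (n + 1), n.choose k * (n + k).choose k

open Real Filter

theorem exists_strictAntiOn_Ici_div_sub_div {L : ℕ → ℝ} {c A B C : ℝ}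
    (hdiff : ∀ᶠ n : ℕ in atTop, c - A / n ≤ L (n + 1) - L n)
    (hdiff₂ : ∀ᶠ n : ℕ in atTop, L (n + 2) - 2 * L (n + 1) + L n ≤ B / (n * (n + 1)))
    (hgrowth : ∀ᶠ n : ℕ in atTop, L n ≤ c * n - log n / 2 + C) :
    ∃ n₀ : ℕ, StrictAntiOn (fun n : ℕ => L (n + 1) / (n + 1) - L n / n) (Set.Ici n₀) := by
  have hlog : ∀ᶠ n : ℕ in atTop, 2 * A + B + 2 * C < log n :=
    (tendsto_log_atTop.comp tendsto_natCast_atTop_atTop).eventually_gt_atTop _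
  obtain ⟨n₀, h⟩ := eventually_atTop.1
    (hdiff.and (hdiff₂.and (hgrowth.and (hlog.and (eventually_gt_atTop 0)))))
  refine ⟨n₀, strictAntiOn_of_succ_lt Set.ordConnected_Ici fun n _ hn _ => ?_⟩
  obtain ⟨h₁, h₂, h₃, h₄, hn₀⟩ := h n hn
  have hn : (0 : ℝ) < n := Nat.cast_pos.2 hn₀
  have hA : n * (c - A / n) = c * n - A := by field_simp
  have hB : n * (n + 1) * (B / (n * (n + 1))) = B := by field_simp
  have key : n * (n + 1) * (n + 2) * ((L (n + 1) / (n + 1) - L n / n) -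
      (L (n + 2) / (n + 2) - L (n + 1) / (n + 1))) =
      2 * n * (L (n + 1) - L n) - n * (n + 1) * (L (n + 2) - 2 * L (n + 1) + L n) - 2 * L n := by
    field_simp
    ring
  have : 0 < n * (n + 1) * (n + 2) * ((L (n + 1) / (n + 1) - L n / n) -
      (L (n + 2) / (n + 2) - L (n + 1) / (n + 1))) := by
    rw [key]
    linarith [mul_le_mul_of_nonneg_left h₁ hn.le,
      mul_le_mul_of_nonneg_left h₂ (by positivity : (0:ℝ) ≤ n * (n + 1))]
  simp only [Order.succ_eq_add_one, Nat.cast_add, Nat.cast_one, add_assoc, one_add_one_eq_two]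
  have := (mul_pos_iff_of_pos_left (by positivity)).1 this
  linarith

theorem cast_add_one_mul_choose {R : Type*} [CommRing R] (m k : ℕ) :
    ((m : R) + 1) * m.choose k = ((m : R) + 1 - k) * (m + 1).choose k := by
  rcases le_or_gt k (m + 1) with hk | hk
  · have h := congrArg (Nat.cast : ℕ → R) (Nat.choose_mul_succ_eq m k)
    push_cast [Nat.cast_sub hk] at h
    linear_combination h
  · simp [Nat.choose_eq_zero_of_lt hk, Nat.choose_eq_zero_of_lt (Nat.lt_of_succ_lt hk)]

theorem delannoy_eq_sum_range {n m : ℕ} (h : n + 1 ≤ m) :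
    delannoy n = ∑ k ∈ Finset.range m, n.choose k * (n + k).choose k :=
  Finset.sum_subset (Finset.range_subset_range.2 h) fun k _ hk => by
    simp [Nat.choose_eq_zero_of_lt (by simpa using hk : n < k)]

/-- Zeilberger certificate of `delannoy_recurrence`: the summand identity telescopes in `k`. -/
def delannoyCertificate (n k : ℕ) : ℕ :=
  2 * (2 * n + 3) * k ^ 2 * ((n + 2).choose k * (n + k).choose k)

theorem delannoy_summand_recurrence (n k : ℕ) :
    (n + 1) * (n + 2) * ((n + 2) * ((n + 2).choose k * (n + 2 + k).choose k) +
        (n + 1) * (n.choose k * (n + k).choose k)) + delannoyCertificate n (k + 1) =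
      (n + 1) * (n + 2) * (3 * (2 * n + 3) * ((n + 1).choose k * (n + 1 + k).choose k)) +
        delannoyCertificate n k := by
  unfold delannoyCertificate
  have h₁ := cast_add_one_mul_choose (R := ℤ) n k
  have h₂ := cast_add_one_mul_choose (R := ℤ) (n + 1) k
  have h₃ := cast_add_one_mul_choose (R := ℤ) (n + k) k
  have h₄ := cast_add_one_mul_choose (R := ℤ) (n + k + 1) k
  have h₅ := congrArg (Nat.cast : ℕ → ℤ) (Nat.add_one_mul_choose_eq (n + 1) k)
  have h₆ := congrArg (Nat.cast : ℕ → ℤ) (Nat.add_one_mul_choose_eq (n + k) k)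
  rw [show n + 2 + k = n + k + 1 + 1 by ring, show n + 1 + k = n + k + 1 by ring,
    show n + (k + 1) = n + k + 1 by ring]
  zify
  push_cast at h₁ h₂ h₃ h₄ h₅ h₆ ⊢
  set a₀ : ℤ := (n.choose k : ℤ)
  set a₁ : ℤ := ((n + 1).choose k : ℤ)
  set a₂ : ℤ := ((n + 2).choose k : ℤ)
  set a₂' : ℤ := ((n + 2).choose (k + 1) : ℤ)
  set b₀ : ℤ := ((n + k).choose k : ℤ)
  set b₁ : ℤ := ((n + k + 1).choose k : ℤ)
  set b₁' : ℤ := ((n + k + 1).choose (k + 1) : ℤ)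
  set b₂ : ℤ := ((n + k + 1 + 1).choose k : ℤ)
  -- Each term is a rational function of `n, k` times `a₂ * b₀ = C(n+2,k) C(n+k,k)`.
  have e₂ : (n + 1) * (n + 2) * (a₂ * b₂) = (n + k + 1) * (n + k + 2) * (a₂ * b₀) := by
    linear_combination (-((n : ℤ) + 1) * a₂) * h₄ + (-((n : ℤ) + k + 2) * a₂) * h₃
  have e₀ : (n + 1) * (n + 2) * (a₀ * b₀) = (n + 1 - k) * (n + 2 - k) * (a₂ * b₀) := by
    linear_combination (((n : ℤ) + 2) * b₀) * h₁ + (((n : ℤ) + 1 - k) * b₀) * h₂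
  have e₁ : (n + 1) * (n + 2) * (a₁ * b₁) = (n + 2 - k) * (n + k + 1) * (a₂ * b₀) := by
    linear_combination (((n : ℤ) + 1) * b₁) * h₂ + (-((n : ℤ) + 2 - k) * a₂) * h₃
  have e' : (k + 1) ^ 2 * (a₂' * b₁') = (n + 2 - k) * (n + k + 1) * (a₂ * b₀) := by
    linear_combination (-((k : ℤ) + 1) * b₁') * h₅ + (-((n : ℤ) + 2) * a₁) * h₆ +
      (((n : ℤ) + k + 1) * b₀) * h₂
  linear_combination ((n : ℤ) + 2) * e₂ + ((n : ℤ) + 1) * e₀ +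
    (2 * (2 * (n : ℤ) + 3)) * e' - (3 * (2 * (n : ℤ) + 3)) * e₁

theorem delannoy_recurrence (n : ℕ) :
    (n + 2) * delannoy (n + 2) + (n + 1) * delannoy n = 3 * (2 * n + 3) * delannoy (n + 1) := by
  have h := Finset.sum_congr rfl fun k (_ : k ∈ Finset.range (n + 3)) =>
    delannoy_summand_recurrence n k
  have htel : ∑ k ∈ Finset.range (n + 3), delannoyCertificate n (k + 1) =
      ∑ k ∈ Finset.range (n + 3), delannoyCertificate n k := by
    rw [Finset.sum_range_succ, Finset.sum_range_succ' _ (n + 2)]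
    simp [delannoyCertificate]
  simp only [Finset.sum_add_distrib, ← Finset.mul_sum, htel] at h
  rw [← delannoy_eq_sum_range le_rfl, ← delannoy_eq_sum_range (by omega),
    ← delannoy_eq_sum_range (by omega)] at h
  exact Nat.eq_of_mul_eq_mul_left (by positivity : 0 < (n + 1) * (n + 2)) (Nat.add_right_cancel h)

theorem delannoy_pos (n : ℕ) : 0 < delannoy n :=
  Finset.sum_pos' (fun _ _ => Nat.zero_le _) ⟨0, by simp, by simp⟩

section Growth

local notation "α" => (3 + 2 * √2 : ℝ)

theorem sqrt_two_bounds : 1.414 < √2 ∧ √2 < 1.415 := by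
  have h := Real.sq_sqrt (show (0 : ℝ) ≤ 2 by norm_num)
  have h' := Real.sqrt_nonneg 2
  constructor <;> nlinarith

theorem mul_six_sub_eq_one : α * (6 - α) = 1 := by
  linear_combination (-4 : ℝ) * Real.sq_sqrt (show (0 : ℝ) ≤ 2 by norm_num)

theorem le_six_sub_mul_of_mul_le {x y : ℝ} (h : α * x ≤ y) : x ≤ (6 - α) * y :=
  calc x = (6 - α) * (α * x) := by linear_combination (-x) * mul_six_sub_eq_one
    _ ≤ (6 - α) * y := by gcongr; linarith [sqrt_two_bounds.2]

theorem six_sub_mul_le_of_le_mul {x y : ℝ} (h : x ≤ α * y) : (6 - α) * x ≤ y :=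
  calc (6 - α) * x ≤ (6 - α) * (α * y) := by gcongr; linarith [sqrt_two_bounds.2]
    _ = y := by linear_combination y * mul_six_sub_eq_one

theorem delannoy_ratio_lower {n : ℕ} (hn : 1 ≤ n) :
    α * (2 * n - 1) * delannoy n ≤ 2 * n * delannoy (n + 1) := by
  induction n, hn using Nat.le_induction with
  | base =>
    norm_num [show delannoy 1 = 3 by decide, show delannoy 2 = 13 by decide]
    linarith [sqrt_two_bounds.2]
  | succ n hn ih =>
    have hrec : ((n + 2) * delannoy (n + 2) + (n + 1) * delannoy n : ℝ) =
        3 * (2 * n + 3) * delannoy (n + 1) := by exact_mod_cast delannoy_recurrence n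
    have hn' : (1 : ℝ) ≤ n := by exact_mod_cast hn
    have hs := sqrt_two_bounds
    have hd : (0 : ℝ) < delannoy (n + 1) := by exact_mod_cast delannoy_pos _
    have ih' : (2 * n - 1) * (delannoy n : ℝ) ≤ (6 - α) * (2 * n * delannoy (n + 1)) :=
      le_six_sub_mul_of_mul_le (by linarith)
    -- the coefficient of `d_{n+1}` left after eliminating `d_{n+2}` by `hrec` and `d_n` by `ih'`
    have hslack : 0 ≤ (α * (5 * n + 2) - 18 * (n + 1)) * (delannoy (n + 1) : ℝ) :=
      mul_nonneg (by nlinarith) hd.le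
    have key : 0 ≤ ((n + 2) * (2 * n - 1)) *
        (2 * (n + 1) * delannoy (n + 2) - α * (2 * n + 1) * delannoy (n + 1) : ℝ) := by
      linear_combination mul_le_mul_of_nonneg_left ih' (by positivity : (0 : ℝ) ≤ 2 * (n + 1) ^ 2)
        + hslack - (2 * (n + 1) * (2 * n - 1) : ℝ) * hrec
    push_cast
    linarith [(mul_nonneg_iff_of_pos_left (by nlinarith)).1 key]

theorem delannoy_ratio_upper {n : ℕ} (hn : 1 ≤ n) :
    2 * n ^ 2 * delannoy (n + 1) ≤ α * (2 * n ^ 2 - n + 2) * delannoy n := by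
  induction n, hn using Nat.le_induction with
  | base =>
    norm_num [show delannoy 1 = 3 by decide, show delannoy 2 = 13 by decide]
    linarith [sqrt_two_bounds.1]
  | succ n hn ih =>
    have hrec : ((n + 2) * delannoy (n + 2) + (n + 1) * delannoy n : ℝ) =
        3 * (2 * n + 3) * delannoy (n + 1) := by exact_mod_cast delannoy_recurrence n
    have hm : (0 : ℝ) ≤ n - 1 := by
      have : (1 : ℝ) ≤ n := by exact_mod_cast hn
      linarith
    have hs := sqrt_two_bounds
    have hd : (0 : ℝ) < delannoy (n + 1) := by exact_mod_cast delannoy_pos _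
    have ih' : (6 - α) * (2 * n ^ 2 * delannoy (n + 1)) ≤
        (2 * n ^ 2 - n + 2) * (delannoy n : ℝ) :=
      six_sub_mul_le_of_le_mul (by linarith)
    -- as in `delannoy_ratio_lower`, written in powers of `n - 1`
    have hslack : 0 ≤ ((-48 + 80 * √2) + (-51 + 94 * √2) * (n - 1) + 44 * √2 * (n - 1) ^ 2 +
        (3 + 6 * √2) * (n - 1) ^ 3) * (delannoy (n + 1) : ℝ) :=
      mul_nonneg (by nlinarith [mul_nonneg hm hm, mul_nonneg (mul_nonneg hm hm) hm]) hd.le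
    have key : 0 ≤ ((n + 2) * (2 * n ^ 2 - n + 2)) * (α * (2 * (n + 1) ^ 2 - (n + 1) + 2) *
        delannoy (n + 1) - 2 * (n + 1) ^ 2 * delannoy (n + 2) : ℝ) := by
      linear_combination mul_le_mul_of_nonneg_left ih' (by positivity : (0 : ℝ) ≤ 2 * (n + 1) ^ 3)
        + hslack + (2 * (n + 1) ^ 2 * (2 * n ^ 2 - n + 2) : ℝ) * hrec
    push_cast
    linarith [(mul_nonneg_iff_of_pos_left (by nlinarith)).1 key]

theorem delannoy_sq_mul_le {n : ℕ} (hn : 3 ≤ n) :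
    (delannoy n : ℝ) ^ 2 * (n + 6) ≤ α ^ (2 * n) := by
  induction n, hn using Nat.le_induction with
  | base =>
    have h : (5.8 : ℝ) ^ 6 ≤ α ^ 6 :=
      pow_le_pow_left₀ (by norm_num) (by linarith [sqrt_two_bounds.1]) 6
    norm_num [show delannoy 3 = 63 by decide] at h ⊢
    linarith
  | succ n hn ih =>
    have hu := delannoy_ratio_upper (n := n) (by omega)
    have hm : (0 : ℝ) ≤ n - 3 := by
      have : (3 : ℝ) ≤ n := by exact_mod_cast hn
      linarith
    have hpoly : (2 * n ^ 2 - n + 2 : ℝ) ^ 2 * (n + 7) ≤ 4 * n ^ 4 * (n + 6) := by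
      nlinarith [mul_nonneg hm hm, mul_nonneg (mul_nonneg hm hm) hm]
    have hn4 : (0 : ℝ) < 4 * n ^ 4 := by positivity
    refine le_of_mul_le_mul_right ?_ hn4
    calc (delannoy (n + 1) : ℝ) ^ 2 * ((n + 1 : ℕ) + 6) * (4 * n ^ 4)
        = (2 * n ^ 2 * delannoy (n + 1)) ^ 2 * (n + 7) := by push_cast; ring
      _ ≤ (α * (2 * n ^ 2 - n + 2) * delannoy n) ^ 2 * (n + 7) := by gcongr
      _ = α ^ 2 * delannoy n ^ 2 * ((2 * n ^ 2 - n + 2) ^ 2 * (n + 7)) := by ring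
      _ ≤ α ^ 2 * delannoy n ^ 2 * (4 * n ^ 4 * (n + 6)) := by gcongr
      _ = α ^ 2 * (delannoy n ^ 2 * (n + 6)) * (4 * n ^ 4) := by ring
      _ ≤ α ^ 2 * α ^ (2 * n) * (4 * n ^ 4) := by gcongr
      _ = α ^ (2 * (n + 1)) * (4 * n ^ 4) := by ring

theorem log_delannoy_succ_sub_ge {n : ℕ} (hn : 1 ≤ n) :
    log α - 1 / n ≤ log (delannoy (n + 1)) - log (delannoy n) := by
  have hl := delannoy_ratio_lower hn
  have hn' : (1 : ℝ) ≤ n := by exact_mod_cast hn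
  have hd₀ : (0 : ℝ) < delannoy n := by exact_mod_cast delannoy_pos _
  have hd₁ : (0 : ℝ) < delannoy (n + 1) := by exact_mod_cast delannoy_pos _
  have hα : (0 : ℝ) < α := by positivity
  have hlog := log_le_sub_one_of_pos (div_pos (mul_pos hα hd₀) hd₁)
  rw [log_div (by positivity) hd₁.ne', log_mul hα.ne' hd₀.ne'] at hlog
  have : α * delannoy n / delannoy (n + 1) - 1 ≤ 1 / n := by
    rw [div_sub_one hd₁.ne', div_le_div_iff₀ hd₁ (by positivity)]
    nlinarith
  linarith

theorem log_delannoy_second_diff_le {n : ℕ} (hn : 1 ≤ n) :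
    log (delannoy (n + 2)) - 2 * log (delannoy (n + 1)) + log (delannoy n) ≤
      2 / (n * (n + 1)) := by
  have hl := delannoy_ratio_lower hn
  have hu : (2 * (n + 1) ^ 2 * delannoy (n + 2) : ℝ) ≤
      α * (2 * (n + 1) ^ 2 - (n + 1) + 2) * delannoy (n + 1) := by
    exact_mod_cast delannoy_ratio_upper (n := n + 1) (by omega)
  have hn' : (1 : ℝ) ≤ n := by exact_mod_cast hn
  have hd₀ : (0 : ℝ) < delannoy n := by exact_mod_cast delannoy_pos _
  have hd₁ : (0 : ℝ) < delannoy (n + 1) := by exact_mod_cast delannoy_pos _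
  have hd₂ : (0 : ℝ) < delannoy (n + 2) := by exact_mod_cast delannoy_pos _
  have hα : (0 : ℝ) < α := by positivity
  have key : n * (n + 1) * (delannoy (n + 2) * delannoy n) ≤
      (n * (n + 1) + 2) * (delannoy (n + 1) : ℝ) ^ 2 := by
    have hc : (0 : ℝ) < 2 * α * (n + 1) * (2 * n - 1) := mul_pos (by positivity) (by linarith)
    refine le_of_mul_le_mul_left ?_ hc
    calc 2 * α * (n + 1) * (2 * n - 1) * (n * (n + 1) * (delannoy (n + 2) * delannoy n))
        = n * ((2 * (n + 1) ^ 2 * delannoy (n + 2)) * (α * (2 * n - 1) * delannoy n)) := by ring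
      _ ≤ n * ((α * (2 * (n + 1) ^ 2 - (n + 1) + 2) * delannoy (n + 1)) *
          (2 * n * delannoy (n + 1))) := by
        gcongr n * ?_
        exact mul_le_mul hu hl (mul_nonneg (mul_nonneg hα.le (by linarith)) hd₀.le)
          (mul_nonneg (mul_nonneg hα.le (by nlinarith)) hd₁.le)
      _ ≤ 2 * α * (n + 1) * (2 * n - 1) * ((n * (n + 1) + 2) * (delannoy (n + 1) : ℝ) ^ 2) := by
        nlinarith [mul_nonneg (mul_nonneg hα.le (sq_nonneg (delannoy (n + 1) : ℝ)))
          (mul_nonneg (sub_nonneg.2 hn') (by positivity : (0 : ℝ) ≤ n + 2))]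
  have hlog := log_le_sub_one_of_pos (div_pos (mul_pos hd₂ hd₀) (pow_pos hd₁ 2))
  rw [log_div (by positivity) (by positivity), log_mul hd₂.ne' hd₀.ne', log_pow] at hlog
  have : delannoy (n + 2) * delannoy n / (delannoy (n + 1) : ℝ) ^ 2 - 1 ≤
      2 / (n * (n + 1)) := by
    rw [div_sub_one (by positivity), div_le_div_iff₀ (by positivity) (by positivity)]
    nlinarith
  push_cast at hlog
  linarith

theorem log_delannoy_le {n : ℕ} (hn : 3 ≤ n) : log (delannoy n) ≤ log α * n - log n / 2 := by
  have hb := delannoy_sq_mul_le hn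
  have hn' : (3 : ℝ) ≤ n := by exact_mod_cast hn
  have hd : (0 : ℝ) < delannoy n := by exact_mod_cast delannoy_pos _
  have h : (delannoy n : ℝ) ^ 2 * n ≤ α ^ (2 * n) := by nlinarith
  have hlog := log_le_log (by positivity) h
  rw [log_mul (by positivity) (by positivity), log_pow, log_pow] at hlog
  push_cast at hlog
  linarith

end Growth

theorem delannoy_root_ratio_eventually_strictAnti :
    ∃ n₀ : ℕ,
      StrictAntiOn
        (fun n : ℕ =>
          ((delannoy (n + 1) : ℝ)) ^ (((n : ℝ) + 1)⁻¹) /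
            ((delannoy n : ℝ)) ^ ((n : ℝ)⁻¹))
        {n : ℕ | n₀ ≤ n} := by
  obtain ⟨n₀, h⟩ :=
    exists_strictAntiOn_Ici_div_sub_div (L := fun n => log (delannoy n)) (C := 0)
    (eventually_atTop.2 ⟨1, fun _ => log_delannoy_succ_sub_ge⟩)
    (eventually_atTop.2 ⟨1, fun _ => log_delannoy_second_diff_le⟩)
    (eventually_atTop.2 ⟨3, fun _ hn => by simpa using log_delannoy_le hn⟩)
  refine ⟨n₀, show StrictAntiOn _ (Set.Ici n₀) from ?_⟩
  convert exp_strictMono.comp_strictAntiOn h using 1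
  funext n
  have hd (m : ℕ) : (0 : ℝ) < delannoy m := by exact_mod_cast delannoy_pos m
  rw [Function.comp_apply, rpow_def_of_pos (hd _), rpow_def_of_pos (hd _), ← exp_sub]
  ring_nf
end

section
/- There exists n₀ such that the sequence of Apéry numbers A_n = ∑_{k=0}^n C(n,k)² C(n+k,k)² satisfies: (A_{n+1}^{1/(n+1)} / A_n^{1/n})_{n ≥ n₀} is strictly decreasing. -/
/-- The `n`-th Apéry number `A_n = ∑_{k=0}^{n} C(n,k)² C(n+k,k)²`. -/
def apery (n : ℕ) : ℕ :=
  ∑ k ∈ Finset.range (n + 1), (n.choose k) ^ 2 * ((n + k).choose k) ^ 2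

/-!
Zeilberger's certificate proves Apéry's recurrence
`(n+2)³ A_{n+2} + (n+1)³ A_n = (34(n+1)³ + 51(n+1)² + 27(n+1) + 5) A_{n+1}`.
Through it, the ratio `q_{n+1} = A_{n+2}/A_{n+1}` is an increasing function of `q_n = A_{n+1}/A_n`,
and this map preserves the bounds `α (1 - 3/(2n) ∓ 3/n²)` on `q_n`, where `α = (1 + √2)⁴`; as they
hold at `n = 3`, they hold for all `n ≥ 3`.

Put `s_n = log q_n` and `T_n = n log A_{n+1} - (n+1) log A_n`. The root ratio is
`exp (T_n / (n (n+1)))` and `T_{n+1} = T_n + (n+1)(s_{n+1} - s_n)`, so the root ratio decreases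
at `n` as soon as `n (n+1) (s_{n+1} - s_n) < 2 T_n`. The ratio bounds make the left side at most
`10`. On the other side `T_n ≥ n log α - log A_n - 4`, and `n log α - log A_n` grows at least like
`log n` because each step adds `log α - s_n ≥ 1/n`; so `T_n → ∞`.
-/

open Finset

theorem Nat.cast_choose_succ_right_mul {K : Type*} [CommRing K] (m k : ℕ) :
    (m.choose (k + 1) : K) * (k + 1) = m.choose k * (m - k) := by
  rcases le_or_gt k m with hk | hk
  · have h := congrArg (Nat.cast : ℕ → K) (Nat.choose_succ_right_eq m k)
    push_cast [Nat.cast_sub hk] at h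
    exact h
  · simp [Nat.choose_eq_zero_of_lt hk, Nat.choose_eq_zero_of_lt (hk.trans (Nat.lt_succ_self k))]

theorem Nat.cast_choose_mul_add_one {K : Type*} [CommRing K] (m k : ℕ) :
    (m.choose k : K) * (m + 1) = (m + 1).choose k * (m + 1 - k) := by
  rcases le_or_gt k (m + 1) with hk | hk
  · have := congrArg (Nat.cast : ℕ → K) (Nat.choose_mul_succ_eq m k)
    push_cast [Nat.cast_sub hk] at this
    exact this
  · simp [Nat.choose_eq_zero_of_lt hk, Nat.choose_eq_zero_of_lt ((Nat.lt_succ_self m).trans hk)]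

theorem Nat.cast_add_one_choose_add_one_mul {K : Type*} [CommRing K] (m k : ℕ) :
    ((m + 1).choose (k + 1) : K) * (k + 1) = (m + 1) * m.choose k := by
  have h := congrArg (Nat.cast : ℕ → K) (Nat.add_one_mul_choose_eq m k)
  push_cast at h
  exact h.symm

namespace Apery

def term (n k : ℕ) : ℚ := (n.choose k : ℚ) ^ 2 * ((n + k).choose k : ℚ) ^ 2

/-- Zeilberger's certificate for Apéry's recurrence. -/
def certificate (n : ℕ) : ℕ → ℚ
  | 0 => 0
  | j + 1 => 4 * (2 * n + 3) * (j * (2 * j + 1) - (2 * n + 3) ^ 2) * term (n + 1) j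

theorem term_telescope (n k : ℕ) :
    (n + 2 : ℚ) ^ 3 * term (n + 2) k + (n + 1 : ℚ) ^ 3 * term n k
        - (34 * (n + 1 : ℚ) ^ 3 + 51 * (n + 1) ^ 2 + 27 * (n + 1) + 5) * term (n + 1) k
      = certificate n (k + 1) - certificate n k := by
  rcases k with _ | j
  · simp only [term, certificate, Nat.choose_zero_right, add_zero]
    push_cast
    ring
  have hj : (j + 1 : ℚ) ≠ 0 := by positivity
  have hn1 : (n + 1 : ℚ) ≠ 0 := by positivity
  have hn2 : (n + 2 : ℚ) ≠ 0 := by positivity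
  set e : ℚ := ((n + 1).choose j : ℚ)
  set d : ℚ := ((n + j + 1).choose j : ℚ)
  have c1 : ((n + 1).choose (j + 1) : ℚ) = e * (n + 1 - j) / (j + 1) := by
    rw [eq_div_iff hj, Nat.cast_choose_succ_right_mul]; push_cast; ring
  have c2 : ((n + 2).choose (j + 1) : ℚ) = (n + 2) * e / (j + 1) := by
    rw [eq_div_iff hj, show n + 2 = n + 1 + 1 from rfl, Nat.cast_add_one_choose_add_one_mul]
    push_cast; ring
  have c0 : (n.choose j : ℚ) = e * (n + 1 - j) / (n + 1) := by
    rw [eq_div_iff hn1, Nat.cast_choose_mul_add_one]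
  have c3 : (n.choose (j + 1) : ℚ) = n.choose j * (n - j) / (j + 1) := by
    rw [eq_div_iff hj, Nat.cast_choose_succ_right_mul]
  have c4 : ((n + j + 1).choose (j + 1) : ℚ) = d * (n + 1) / (j + 1) := by
    rw [eq_div_iff hj, Nat.cast_choose_succ_right_mul]; push_cast; ring
  have c5 : ((n + j + 2).choose (j + 1) : ℚ) = (n + j + 2) * d / (j + 1) := by
    rw [eq_div_iff hj, show n + j + 2 = n + j + 1 + 1 from rfl, Nat.cast_add_one_choose_add_one_mul]
    push_cast; ring
  have c6 : ((n + j + 3).choose (j + 1) : ℚ)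
      = (n + j + 2).choose (j + 1) * (n + j + 3) / (n + 2) := by
    have h := Nat.cast_choose_mul_add_one (K := ℚ) (n + j + 2) (j + 1)
    push_cast at h
    rw [eq_div_iff hn2, show n + j + 3 = n + j + 2 + 1 from rfl]
    linear_combination -h
  simp only [term, certificate]
  rw [show n + 2 + (j + 1) = n + j + 3 by ring, show n + (j + 1) = n + j + 1 by ring,
    show n + 1 + (j + 1) = n + j + 2 by ring, show n + 1 + j = n + j + 1 by ring,
    c6, c5, c4, c3, c0, c2, c1]
  push_cast
  field_simp
  ring

theorem term_eq_zero {m k : ℕ} (h : m < k) : term m k = 0 := by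
  simp [term, Nat.choose_eq_zero_of_lt h]

theorem cast_apery_eq_sum_term {m N : ℕ} (h : m < N) :
    (apery m : ℚ) = ∑ k ∈ range N, term m k := by
  have hterm : (apery m : ℚ) = ∑ k ∈ range (m + 1), term m k := by
    simp [apery, term]
  exact hterm.trans <| Finset.sum_subset (range_subset_range.2 h) fun k _ hk =>
    term_eq_zero (by simpa using hk)

end Apery

open Apery in
theorem apery_recurrence (n : ℕ) :
    (n + 2) ^ 3 * apery (n + 2) + (n + 1) ^ 3 * apery n
      = (34 * (n + 1) ^ 3 + 51 * (n + 1) ^ 2 + 27 * (n + 1) + 5) * apery (n + 1) := by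
  have htel := Finset.sum_range_sub (certificate n) (n + 3)
  simp only [← term_telescope, Finset.sum_sub_distrib, Finset.sum_add_distrib, ← Finset.mul_sum,
    ← cast_apery_eq_sum_term (by omega : n + 2 < n + 3),
    ← cast_apery_eq_sum_term (by omega : n + 1 < n + 3),
    ← cast_apery_eq_sum_term (by omega : n < n + 3)] at htel
  have hend : certificate n (n + 3) = 0 := by
    simp [certificate, term_eq_zero (by omega : n + 1 < n + 2)]
  rw [hend, certificate, sub_zero, sub_eq_zero] at htel
  exact_mod_cast htel

theorem apery_pos (n : ℕ) : 0 < apery n :=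
  Finset.sum_pos' (fun _ _ => Nat.zero_le _) ⟨0, by simp⟩

open Real Filter

namespace Apery

/-- `(1 + √2)⁴`, the dominant root of the characteristic polynomial `x² - 34x + 1` of Apéry's
recurrence. -/
noncomputable def growthRate : ℝ := 17 + 12 * √2

theorem growthRate_pos : 0 < growthRate := by unfold growthRate; positivity

noncomputable def lowerRatio (x : ℝ) : ℝ := growthRate * ((2 * x ^ 2 - 3 * x - 6) / (2 * x ^ 2))

noncomputable def upperRatio (x : ℝ) : ℝ := growthRate * ((2 * x ^ 2 - 3 * x + 6) / (2 * x ^ 2))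

theorem lowerRatio_pos {x : ℝ} (hx : 3 ≤ x) : 0 < lowerRatio x := by
  have := growthRate_pos
  have : 0 < 2 * x ^ 2 - 3 * x - 6 := by nlinarith
  unfold lowerRatio; positivity

theorem upperRatio_pos {x : ℝ} (hx : x ≠ 0) : 0 < upperRatio x := by
  have := growthRate_pos
  have : 0 < 2 * x ^ 2 - 3 * x + 6 := by nlinarith [sq_nonneg (x - 1)]
  unfold upperRatio; positivity

theorem lowerRatio_step {y : ℝ} (hy : 3 ≤ y) :
    lowerRatio (y + 1) * (y + 2) ^ 3 + (y + 1) ^ 3 / lowerRatio y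
      ≤ 34 * (y + 1) ^ 3 + 51 * (y + 1) ^ 2 + 27 * (y + 1) + 5 := by
  have hs2 : √2 ^ 2 = 2 := sq_sqrt zero_le_two
  have hs : 0 ≤ √2 := sqrt_nonneg 2
  have ht : 0 ≤ y - 3 := by linarith
  have hR : 0 < 2 * y ^ 2 - 3 * y - 6 := by nlinarith
  have hα := growthRate_pos
  simp only [lowerRatio, ← mul_div_assoc]
  rw [div_div_eq_mul_div, div_mul_eq_mul_div, div_add_div _ _ (by positivity) (by positivity),
    div_le_iff₀ (by positivity)]
  unfold growthRate
  -- Expanded at `y = 3`, the difference has coefficients `a + b√2` with `a, b > 0`.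
  have hE : 2 * (17 + 12 * √2) * (34 * (y + 1) ^ 3 + 51 * (y + 1) ^ 2 + 27 * (y + 1) + 5)
        * (y + 1) ^ 2 * (2 * y ^ 2 - 3 * y - 6)
      - ((17 + 12 * √2) ^ 2 * (2 * (y + 1) ^ 2 - 3 * (y + 1) - 6) * (2 * y ^ 2 - 3 * y - 6)
        * (y + 2) ^ 3 + 4 * (y + 1) ^ 5 * y ^ 2)
      = (2001246 + 1434960 * √2) + (7320273 + 5200344 * √2) * (y - 3)
        + (5399166 + 3829512 * √2) * (y - 3) ^ 2 + (1649718 + 1169376 * √2) * (y - 3) ^ 3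
        + (230310 + 163200 * √2) * (y - 3) ^ 4 + (12195 + 8640 * √2) * (y - 3) ^ 5 := by
    linear_combination (-144 * (2 * (y + 1) ^ 2 - 3 * (y + 1) - 6) * (2 * y ^ 2 - 3 * y - 6)
      * (y + 2) ^ 3) * hs2
  nlinarith [pow_nonneg ht 2, pow_nonneg ht 3, pow_nonneg ht 4, pow_nonneg ht 5,
    mul_nonneg hs ht, mul_nonneg hs (pow_nonneg ht 2), mul_nonneg hs (pow_nonneg ht 3),
    mul_nonneg hs (pow_nonneg ht 4), mul_nonneg hs (pow_nonneg ht 5)]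

theorem upperRatio_step {y : ℝ} (hy : 3 ≤ y) :
    34 * (y + 1) ^ 3 + 51 * (y + 1) ^ 2 + 27 * (y + 1) + 5
      ≤ upperRatio (y + 1) * (y + 2) ^ 3 + (y + 1) ^ 3 / upperRatio y := by
  have hs2 : √2 ^ 2 = 2 := sq_sqrt zero_le_two
  have hs : 0 ≤ √2 := sqrt_nonneg 2
  have ht : 0 ≤ y - 3 := by linarith
  have hR : 0 < 2 * y ^ 2 - 3 * y + 6 := by nlinarith
  have hα := growthRate_pos
  simp only [upperRatio, ← mul_div_assoc]
  rw [div_div_eq_mul_div, div_mul_eq_mul_div, div_add_div _ _ (by positivity) (by positivity),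
    le_div_iff₀ (by positivity)]
  unfold growthRate
  have hE : (17 + 12 * √2) ^ 2 * (2 * (y + 1) ^ 2 - 3 * (y + 1) + 6) * (2 * y ^ 2 - 3 * y + 6)
        * (y + 2) ^ 3 + 4 * (y + 1) ^ 5 * y ^ 2
      - 2 * (17 + 12 * √2) * (34 * (y + 1) ^ 3 + 51 * (y + 1) ^ 2 + 27 * (y + 1) + 5)
        * (y + 1) ^ 2 * (2 * y ^ 2 - 3 * y + 6)
      = (2828814 + 2005200 * √2) + (3152331 + 2233800 * √2) * (y - 3)
        + (1489494 + 1054968 * √2) * (y - 3) ^ 2 + (349734 + 247584 * √2) * (y - 3) ^ 3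
        + (39210 + 27744 * √2) * (y - 3) ^ 4 + (1629 + 1152 * √2) * (y - 3) ^ 5 := by
    linear_combination (144 * (2 * (y + 1) ^ 2 - 3 * (y + 1) + 6) * (2 * y ^ 2 - 3 * y + 6)
      * (y + 2) ^ 3) * hs2
  nlinarith [pow_nonneg ht 2, pow_nonneg ht 3, pow_nonneg ht 4, pow_nonneg ht 5,
    mul_nonneg hs ht, mul_nonneg hs (pow_nonneg ht 2), mul_nonneg hs (pow_nonneg ht 3),
    mul_nonneg hs (pow_nonneg ht 4), mul_nonneg hs (pow_nonneg ht 5)]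

noncomputable def ratio (n : ℕ) : ℝ := apery (n + 1) / apery n

theorem ratio_pos (n : ℕ) : 0 < ratio n :=
  div_pos (Nat.cast_pos.2 (apery_pos _)) (Nat.cast_pos.2 (apery_pos _))

theorem log_ratio (n : ℕ) : log (ratio n) = log (apery (n + 1)) - log (apery n) :=
  log_div (Nat.cast_pos.2 (apery_pos _)).ne' (Nat.cast_pos.2 (apery_pos _)).ne'

theorem ratio_succ (n : ℕ) :
    ratio (n + 1) * (n + 2) ^ 3
      = 34 * (n + 1) ^ 3 + 51 * (n + 1) ^ 2 + 27 * (n + 1) + 5 - (n + 1) ^ 3 / ratio n := by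
  have hrec : ((n + 2) ^ 3 * apery (n + 2) + (n + 1) ^ 3 * apery n : ℝ)
      = (34 * (n + 1) ^ 3 + 51 * (n + 1) ^ 2 + 27 * (n + 1) + 5) * apery (n + 1) := by
    exact_mod_cast apery_recurrence n
  have h0 : (apery n : ℝ) ≠ 0 := (Nat.cast_pos.2 (apery_pos _)).ne'
  have h1 : (apery (n + 1) : ℝ) ≠ 0 := (Nat.cast_pos.2 (apery_pos _)).ne'
  unfold ratio
  field_simp
  linear_combination hrec

theorem ratio_three : ratio 3 = 33001 / 1445 := by
  rw [ratio, show apery 4 = 33001 by decide, show apery 3 = 1445 by decide]; norm_num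

theorem growthRate_mem_Ioo : growthRate ∈ Set.Ioo 33 34 := by
  have h1 : (4 / 3 : ℝ) < √2 := by
    rw [lt_sqrt (by norm_num)]; norm_num
  have h2 : √2 < 17 / 12 := by
    rw [sqrt_lt' (by norm_num)]; norm_num
  constructor <;> unfold growthRate <;> linarith

theorem lowerRatio_le_ratio {n : ℕ} (hn : 3 ≤ n) : lowerRatio n ≤ ratio n := by
  induction n, hn using Nat.le_induction with
  | base =>
    rw [ratio_three, lowerRatio]
    have := growthRate_mem_Ioo.2
    norm_num
    linarith
  | succ n hn ih =>
    have hn' : (3 : ℝ) ≤ n := by exact_mod_cast hn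
    have hinv : (n + 1 : ℝ) ^ 3 / ratio n ≤ (n + 1) ^ 3 / lowerRatio n :=
      div_le_div_of_nonneg_left (by positivity) (lowerRatio_pos hn') ih
    refine le_of_mul_le_mul_right ?_ (by positivity : (0 : ℝ) < (n + 2) ^ 3)
    push_cast
    linarith [lowerRatio_step hn', ratio_succ n]

theorem ratio_le_upperRatio {n : ℕ} (hn : 3 ≤ n) : ratio n ≤ upperRatio n := by
  induction n, hn using Nat.le_induction with
  | base =>
    rw [ratio_three, upperRatio]
    have := growthRate_mem_Ioo.1
    norm_num
    linarith
  | succ n hn ih =>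
    have hn' : (3 : ℝ) ≤ n := by exact_mod_cast hn
    have hinv : (n + 1 : ℝ) ^ 3 / upperRatio n ≤ (n + 1) ^ 3 / ratio n :=
      div_le_div_of_nonneg_left (by positivity) (ratio_pos n) ih
    refine le_of_mul_le_mul_right ?_ (by positivity : (0 : ℝ) < (n + 2) ^ 3)
    push_cast
    linarith [upperRatio_step hn', ratio_succ n]

theorem log_ratio_le {n : ℕ} (hn : 6 ≤ n) : log (ratio n) ≤ log growthRate - 1 / n := by
  have hn' : (6 : ℝ) ≤ n := by exact_mod_cast hn
  have hα := growthRate_pos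
  have hupper : upperRatio n ≤ growthRate * (1 - 1 / n) := by
    rw [upperRatio, ← mul_div_assoc, div_le_iff₀ (by positivity),
      show growthRate * (1 - 1 / n) * (2 * n ^ 2) = growthRate * (2 * n ^ 2 - 2 * n) by
        field_simp]
    gcongr
    linarith
  have hpos : (0 : ℝ) < 1 - 1 / n := by
    rw [sub_pos, div_lt_one (by positivity)]; linarith
  calc log (ratio n) ≤ log (growthRate * (1 - 1 / n)) :=
        log_le_log (ratio_pos n) ((ratio_le_upperRatio (by omega)).trans hupper)
    _ = log growthRate + log (1 - 1 / n) := log_mul hα.ne' hpos.ne'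
    _ ≤ log growthRate - 1 / n := by linarith [log_le_sub_one_of_pos hpos]

theorem log_ratio_ge {n : ℕ} (hn : 5 ≤ n) : log growthRate - 4 / n ≤ log (ratio n) := by
  have hx : (5 : ℝ) ≤ n := by exact_mod_cast hn
  set x : ℝ := (n : ℝ)
  have hq : 0 < 2 * x ^ 2 - 3 * x - 6 := by nlinarith
  have hpos : 0 < (2 * x ^ 2 - 3 * x - 6) / (2 * x ^ 2) := by positivity
  have hinv : -(4 / x) ≤ 1 - ((2 * x ^ 2 - 3 * x - 6) / (2 * x ^ 2))⁻¹ := by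
    rw [inv_div, one_sub_div hq.ne', ← neg_div, div_le_div_iff₀ (by positivity) hq]
    nlinarith
  calc log growthRate - 4 / x
      ≤ log growthRate + log ((2 * x ^ 2 - 3 * x - 6) / (2 * x ^ 2)) := by
        linarith [one_sub_inv_le_log_of_pos hpos]
    _ = log (lowerRatio x) := by rw [lowerRatio, log_mul growthRate_pos.ne' hpos.ne']
    _ ≤ log (ratio n) :=
        log_le_log (mul_pos growthRate_pos hpos) (lowerRatio_le_ratio (by omega))

theorem log_ratio_succ_sub_le {n : ℕ} (hn : 8 ≤ n) :
    n * (n + 1) * (log (ratio (n + 1)) - log (ratio n)) ≤ 10 := by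
  have hn' : (8 : ℝ) ≤ n := by exact_mod_cast hn
  have hα := growthRate_pos
  have hL : 0 < lowerRatio n := lowerRatio_pos (by linarith)
  have hU : 0 < upperRatio (n + 1) := upperRatio_pos (by positivity)
  have hgap : log (ratio (n + 1)) - log (ratio n) ≤ upperRatio (n + 1) / lowerRatio n - 1 := by
    have h1 := log_le_log (ratio_pos _) (ratio_le_upperRatio (n := n + 1) (by omega))
    have h2 := log_le_log hL (lowerRatio_le_ratio (n := n) (by omega))
    have h3 := log_le_sub_one_of_pos (div_pos hU hL)
    rw [log_div hU.ne' hL.ne'] at h3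
    push_cast at h1
    linarith
  have hpoly : n * (n + 1) * (upperRatio (n + 1) / lowerRatio n - 1) ≤ (10 : ℝ) := by
    have : 0 < 2 * (n : ℝ) ^ 2 - 3 * n - 6 := by nlinarith
    unfold upperRatio lowerRatio
    rw [mul_div_mul_left _ _ hα.ne', div_div_div_eq, div_sub_one (by positivity),
      mul_div_assoc', div_le_iff₀ (by positivity)]
    have h : (n : ℝ) * (15 * n ^ 2 + 15 * n + 6) ≤ 10 * (n + 1) * (2 * n ^ 2 - 3 * n - 6) := by
      nlinarith
    nlinarith [mul_le_mul_of_nonneg_left h (by positivity : (0 : ℝ) ≤ 2 * (n + 1))]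
  calc n * (n + 1) * (log (ratio (n + 1)) - log (ratio n))
      ≤ n * (n + 1) * (upperRatio (n + 1) / lowerRatio n - 1) := by gcongr
    _ ≤ 10 := hpoly

noncomputable def logDeficit (n : ℕ) : ℝ := n * log growthRate - log (apery n)

theorem logDeficit_succ (n : ℕ) :
    logDeficit (n + 1) = logDeficit n + (log growthRate - log (ratio n)) := by
  rw [logDeficit, logDeficit, log_ratio]; push_cast; ring

theorem log_add_le_logDeficit {n : ℕ} (hn : 6 ≤ n) :
    log n + (logDeficit 6 - log 6) ≤ logDeficit n := by
  induction n, hn using Nat.le_induction with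
  | base => norm_num
  | succ n hn ih =>
    have hn' : (0 : ℝ) < n := by positivity
    have hlog : log (n + 1 : ℝ) - log n ≤ 1 / n := by
      rw [← log_div (by positivity) hn'.ne']
      linarith [log_le_sub_one_of_pos (by positivity : (0 : ℝ) < (n + 1) / n),
        show ((n : ℝ) + 1) / n - 1 = 1 / n by field_simp; ring]
    rw [logDeficit_succ n]
    push_cast
    linarith [log_ratio_le hn]

theorem tendsto_logDeficit : Tendsto logDeficit atTop atTop :=
  tendsto_atTop_mono' atTop (eventually_atTop.2 ⟨6, fun _ => log_add_le_logDeficit⟩) <|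
    tendsto_atTop_add_const_right _ _ (tendsto_log_atTop.comp tendsto_natCast_atTop_atTop)

noncomputable def scaledLogRootRatio (n : ℕ) : ℝ :=
  n * log (apery (n + 1)) - (n + 1) * log (apery n)

theorem scaledLogRootRatio_eq (n : ℕ) :
    scaledLogRootRatio n = n * (log (ratio n) - log growthRate) + logDeficit n := by
  rw [scaledLogRootRatio, logDeficit, log_ratio]; ring

theorem scaledLogRootRatio_succ (n : ℕ) : scaledLogRootRatio (n + 1)
    = scaledLogRootRatio n + (n + 1) * (log (ratio (n + 1)) - log (ratio n)) := by
  simp only [scaledLogRootRatio, log_ratio]; push_cast; ring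

theorem tendsto_scaledLogRootRatio : Tendsto scaledLogRootRatio atTop atTop := by
  refine tendsto_atTop_mono' atTop (eventually_atTop.2 ⟨5, fun n hn => ?_⟩)
    (tendsto_atTop_add_const_right _ (-4) tendsto_logDeficit)
  have hn' : (0 : ℝ) < n := Nat.cast_pos.2 (by omega)
  have h := mul_le_mul_of_nonneg_left (log_ratio_ge hn) hn'.le
  rw [mul_sub, mul_div_cancel₀ _ hn'.ne'] at h
  rw [scaledLogRootRatio_eq]
  linarith

noncomputable def rootRatio (n : ℕ) : ℝ :=
  (apery (n + 1) : ℝ) ^ ((n : ℝ) + 1)⁻¹ / (apery n : ℝ) ^ (n : ℝ)⁻¹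

theorem rootRatio_eq_exp {n : ℕ} (hn : n ≠ 0) :
    rootRatio n = exp (scaledLogRootRatio n / (n * (n + 1))) := by
  rw [rootRatio, rpow_def_of_pos (Nat.cast_pos.2 (apery_pos _)),
    rpow_def_of_pos (Nat.cast_pos.2 (apery_pos _)), ← exp_sub,
    scaledLogRootRatio]
  congr 1
  field_simp

theorem rootRatio_succ_lt {n : ℕ} (hn : n ≠ 0)
    (h : n * (n + 1) * (log (ratio (n + 1)) - log (ratio n)) < 2 * scaledLogRootRatio n) :
    rootRatio (n + 1) < rootRatio n := by
  have hn' : (0 : ℝ) < n := by positivity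
  rw [rootRatio_eq_exp hn, rootRatio_eq_exp n.succ_ne_zero, exp_lt_exp, div_lt_div_iff₀
    (by positivity) (by positivity), scaledLogRootRatio_succ]
  push_cast
  nlinarith

end Apery

theorem apery_root_ratio_eventually_strictAnti :
    ∃ n₀ : ℕ,
      StrictAntiOn
        (fun n : ℕ =>
          ((apery (n + 1) : ℝ)) ^ (((n : ℝ) + 1)⁻¹) /
            ((apery n : ℝ)) ^ ((n : ℝ)⁻¹))
        {n : ℕ | n₀ ≤ n} := by
  obtain ⟨N, hN⟩ := eventually_atTop.1
    ((eventually_ge_atTop 8).and (Apery.tendsto_scaledLogRootRatio.eventually_gt_atTop 5))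
  refine ⟨N, strictAntiOn_of_add_one_lt Set.ordConnected_Ici fun n _ hn _ => ?_⟩
  obtain ⟨h8, hT⟩ := hN n hn
  exact Apery.rootRatio_succ_lt (by omega) (by linarith [Apery.log_ratio_succ_sub_le h8])
end
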